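/- arXiv:1008.3124 — 8 statements merged into one kernel-verified Lean document; each statement's English description precedes it below -/
import Mathlib

section
/- Let M be a feasible matching for a p-subset A of [p+q], and let Π ⊆ M be any subset of arcs. Define A' = A △ (⋃_{π∈Π} π), the symmetric difference of A with the union of the chosen arcs. Then A' is again a p-element subset of [p+q] and M is a feasible matching for A'. Moreover, applying the same exchange operation with Π to A' returns A. -/
open Finset

/-- The two-element set of endpoints of an arc `π = (i,j)`. -/
def arcSet (π : ℕ × ℕ) : Finset ℕ := {π.1, π.2}

/-- `M` is a feasible matching for the `p`-subset `A` of `[p+q] = {1,…,p+q}`: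
`q` pairwise disjoint nested arcs `(i,j)`, `i<j`, each containing exactly one element
of `A` and one of its complement, with no free element covered by an arc's interval. -/
def IsFeasibleMatching (p q : ℕ) (A : Finset ℕ) (M : Finset (ℕ × ℕ)) : Prop :=
  M.card = q ∧
  (∀ π ∈ M, 1 ≤ π.1 ∧ π.1 < π.2 ∧ π.2 ≤ p + q) ∧
  (∀ π ∈ M, ∀ π' ∈ M, π ≠ π' → Disjoint (arcSet π) (arcSet π')) ∧
  (∀ π ∈ M, (arcSet π ∩ A).card = 1 ∧
            (arcSet π ∩ (Finset.Icc 1 (p + q) \ A)).card = 1) ∧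
  (∀ π ∈ M, ∀ π' ∈ M,
      Disjoint (Finset.Icc π.1 π.2) (Finset.Icc π'.1 π'.2) ∨
      Finset.Icc π.1 π.2 ⊆ Finset.Icc π'.1 π'.2 ∨
      Finset.Icc π'.1 π'.2 ⊆ Finset.Icc π.1 π.2) ∧
  (∀ k ∈ Finset.Icc 1 (p + q), (∀ π ∈ M, k ∉ arcSet π) →
      ∀ π ∈ M, k ∉ Finset.Icc π.1 π.2)

open Classical in
/-- The number of members of the collection `𝒜` for which `M` is a feasible matching. -/
noncomputable def feasCount (p q : ℕ) (𝒜 : Finset (Finset ℕ)) (M : Finset (ℕ × ℕ)) : ℕ :=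
  (𝒜.filter (fun A => IsFeasibleMatching p q A M)).card

/-- Two collections of `p`-subsets of `[p+q]` are balanced if every matching is a
feasible matching for equally many members of each. -/
def BalancedPair (p q : ℕ) (𝒜 𝒜' : Finset (Finset ℕ)) : Prop :=
  ∀ M : Finset (ℕ × ℕ), feasCount p q 𝒜 M = feasCount p q 𝒜' M


/-- Exchange operation: for a feasible matching `M` for the `p`-subset `A` of `[p+q]`
and any `Π ⊆ M`, the set `A' = A △ ⋃_{π∈Π} π` is again a `p`-subset of `[p+q]`, `M` is
feasible for `A'`, and the same exchange applied to `A'` returns `A`. -/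
theorem stmt3 (p q : ℕ) (A : Finset ℕ) (hA : A ⊆ Finset.Icc 1 (p + q))
    (hAcard : A.card = p) (M Pset : Finset (ℕ × ℕ))
    (hM : IsFeasibleMatching p q A M) (hPset : Pset ⊆ M) :
    symmDiff A (Pset.biUnion arcSet) ⊆ Finset.Icc 1 (p + q) ∧
    (symmDiff A (Pset.biUnion arcSet)).card = p ∧
    IsFeasibleMatching p q (symmDiff A (Pset.biUnion arcSet)) M ∧
    symmDiff (symmDiff A (Pset.biUnion arcSet)) (Pset.biUnion arcSet) = A := by
  obtain ⟨hcard, hbd, hdisj, hone, hnest, hfree⟩ := hM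
  set U := Pset.biUnion arcSet with hU
  have hmemU : ∀ x, x ∈ U ↔ ∃ π ∈ Pset, x ∈ arcSet π := by
    intro x; simp [hU]
  have hUsub : U ⊆ Finset.Icc 1 (p+q) := by
    intro x hx
    obtain ⟨π, hπ, hx⟩ := (hmemU x).1 hx
    have hb := hbd π (hPset hπ)
    simp only [arcSet, Finset.mem_insert, Finset.mem_singleton] at hx
    rw [Finset.mem_Icc]
    rcases hx with rfl | rfl <;> omega
  have hA'mem : ∀ x, x ∈ symmDiff A U ↔ ((x ∈ A ∧ x ∉ U) ∨ (x ∈ U ∧ x ∉ A)) := by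
    intro x; exact Finset.mem_symmDiff
  have hA'sub : symmDiff A U ⊆ Finset.Icc 1 (p+q) := by
    intro x hx
    rcases (hA'mem x).1 hx with ⟨h,_⟩|⟨h,_⟩
    · exact hA h
    · exact hUsub h
  have hpdisj : ∀ x ∈ Pset, ∀ y ∈ Pset, x ≠ y → Disjoint (arcSet x) (arcSet y) :=
    fun x hx y hy hxy => hdisj x (hPset hx) y (hPset hy) hxy
  have hUcard : U.card = 2 * Pset.card := by
    rw [hU, Finset.card_biUnion hpdisj]
    have h2 : ∀ π ∈ Pset, (arcSet π).card = 2 := by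
      intro π hπ
      have hb := hbd π (hPset hπ)
      exact Finset.card_pair (by omega)
    rw [Finset.sum_congr rfl h2, Finset.sum_const, smul_eq_mul, mul_comm]
  have hAU : A ∩ U = Pset.biUnion (fun π => arcSet π ∩ A) := by
    ext x
    simp only [Finset.mem_inter, hmemU, Finset.mem_biUnion]
    tauto
  have hAUcard : (A ∩ U).card = Pset.card := by
    rw [hAU, Finset.card_biUnion]
    · rw [Finset.sum_congr rfl (fun π hπ => (hone π (hPset hπ)).1)]
      simp
    · intro x hx y hy hxy
      exact Finset.disjoint_of_subset_left Finset.inter_subset_left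
        (Finset.disjoint_of_subset_right Finset.inter_subset_left (hpdisj x hx y hy hxy))
  have hSD : symmDiff A U = (A \ U) ∪ (U \ A) := by
    ext x
    simp only [hA'mem, Finset.mem_union, Finset.mem_sdiff]
  have hA'card : (symmDiff A U).card = p := by
    rw [hSD, Finset.card_union_of_disjoint disjoint_sdiff_sdiff]
    have h1 : (A \ U).card + (A ∩ U).card = A.card := Finset.card_sdiff_add_card_inter A U
    have h2 : (U \ A).card + (U ∩ A).card = U.card := Finset.card_sdiff_add_card_inter U A
    rw [Finset.inter_comm] at h2
    omega
  have hone' : ∀ π ∈ M, (arcSet π ∩ symmDiff A U).card = 1 ∧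
      (arcSet π ∩ (Finset.Icc 1 (p+q) \ symmDiff A U)).card = 1 := by
    intro π hπ
    by_cases hp : π ∈ Pset
    · have hsub : arcSet π ⊆ U := fun x hx => (hmemU x).2 ⟨π, hp, hx⟩
      have e1 : arcSet π ∩ symmDiff A U = arcSet π ∩ (Finset.Icc 1 (p+q) \ A) := by
        ext x
        simp only [Finset.mem_inter, hA'mem, Finset.mem_sdiff]
        constructor
        · rintro ⟨hx, ⟨_, hnU⟩ | ⟨_, hnA⟩⟩
          · exact absurd (hsub hx) hnU
          · exact ⟨hx, hUsub (hsub hx), hnA⟩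
        · rintro ⟨hx, _, hnA⟩
          exact ⟨hx, Or.inr ⟨hsub hx, hnA⟩⟩
      have e2 : arcSet π ∩ (Finset.Icc 1 (p+q) \ symmDiff A U) = arcSet π ∩ A := by
        ext x
        simp only [Finset.mem_inter, Finset.mem_sdiff, hA'mem]
        constructor
        · rintro ⟨hx, _, h⟩
          by_contra hc
          have hnA : x ∉ A := fun hxA => hc ⟨hx, hxA⟩
          exact h (Or.inr ⟨hsub hx, hnA⟩)
        · rintro ⟨hx, hxA⟩
          refine ⟨hx, hA hxA, ?_⟩
          rintro (⟨_, hnU⟩ | ⟨_, hnA⟩)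
          · exact hnU (hsub hx)
          · exact hnA hxA
      rw [e1, e2]
      exact ⟨(hone π hπ).2, (hone π hπ).1⟩
    · have hnU : ∀ x ∈ arcSet π, x ∉ U := by
        intro x hx hxU
        obtain ⟨π', hπ', hx'⟩ := (hmemU x).1 hxU
        have hne : π ≠ π' := fun h => hp (h ▸ hπ')
        exact (Finset.disjoint_left.1 (hdisj π hπ π' (hPset hπ') hne)) hx hx'
      have e1 : arcSet π ∩ symmDiff A U = arcSet π ∩ A := by
        ext x; simp only [Finset.mem_inter, hA'mem]
        constructor
        · rintro ⟨hx, ⟨hxA,_⟩|⟨hxU,_⟩⟩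
          · exact ⟨hx, hxA⟩
          · exact absurd hxU (hnU x hx)
        · rintro ⟨hx, hxA⟩; exact ⟨hx, Or.inl ⟨hxA, hnU x hx⟩⟩
      have e2 : arcSet π ∩ (Finset.Icc 1 (p+q) \ symmDiff A U)
          = arcSet π ∩ (Finset.Icc 1 (p+q) \ A) := by
        ext x; simp only [Finset.mem_inter, Finset.mem_sdiff, hA'mem]
        constructor
        · rintro ⟨hx, hI, h⟩
          exact ⟨hx, hI, fun hxA => h (Or.inl ⟨hxA, hnU x hx⟩)⟩
        · rintro ⟨hx, hI, hnA⟩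
          refine ⟨hx, hI, ?_⟩
          rintro (⟨hxA,_⟩|⟨hxU,_⟩)
          · exact hnA hxA
          · exact hnU x hx hxU
      rw [e1, e2]; exact hone π hπ
  refine ⟨hA'sub, hA'card, ⟨hcard, hbd, hdisj, hone', hnest, hfree⟩, ?_⟩
  exact symmDiff_symmDiff_cancel_right U A
end

section
/- If (A, M) and (A', M) are two configurations with the same feasible matching M (i.e. M is a feasible matching for both p-subsets A and A' of [p+q]), then A' can be obtained from A by the exchange operation with respect to some subset Π ⊆ M, namely A' = A △ (⋃_{π∈Π} π). -/
open Finset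

/-!
Every arc of a feasible matching has exactly one endpoint in the subset, so on each arc `A` and
`A'` either agree or are complementary: the symmetric difference `A ∆ A'` is a union of whole
arcs. It meets no free element, since counting shows that a feasible matching leaves only elements
of the subset uncovered. Taking `Π` to be the arcs inside `A ∆ A'` gives `A ∆ ⋃ Π = A'`.
-/

lemma card_pair_inter_eq_one_iff {α : Type*} [DecidableEq α] {a b : α} {s : Finset α}
    (hab : a ≠ b) :
    (({a, b} : Finset α) ∩ s).card = 1 ↔ (a ∈ s ↔ b ∉ s) := by
  by_cases ha : a ∈ s <;> by_cases hb : b ∈ s <;>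
    simp [Finset.insert_inter_of_mem, Finset.insert_inter_of_notMem, ha, hb, hab]

namespace IsFeasibleMatching

variable {p q : ℕ} {A : Finset ℕ} {M : Finset (ℕ × ℕ)}

lemma biUnion_arcSet_subset (hM : IsFeasibleMatching p q A M) :
    M.biUnion arcSet ⊆ Icc 1 (p + q) := by
  intro k hk
  obtain ⟨π, hπ, hkπ⟩ := mem_biUnion.mp hk
  have := hM.2.1 π hπ
  simp only [arcSet, mem_insert, mem_singleton] at hkπ
  rcases hkπ with rfl | rfl <;> simp only [mem_Icc] <;> omega

lemma card_arcSet (hM : IsFeasibleMatching p q A M) {π : ℕ × ℕ} (hπ : π ∈ M) :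
    (arcSet π).card = 2 :=
  card_pair (hM.2.1 π hπ).2.1.ne

lemma card_biUnion_arcSet (hM : IsFeasibleMatching p q A M) :
    (M.biUnion arcSet).card = 2 * q := by
  rw [card_biUnion hM.2.2.1, sum_congr rfl fun π hπ => hM.card_arcSet hπ, sum_const, hM.1,
    smul_eq_mul, mul_comm]

lemma card_inter_biUnion_arcSet (hM : IsFeasibleMatching p q A M) :
    (A ∩ M.biUnion arcSet).card = q := by
  have hdisj : (M : Set (ℕ × ℕ)).PairwiseDisjoint (fun π => arcSet π ∩ A) :=
    fun π hπ π' hπ' hne => (hM.2.2.1 π hπ π' hπ' hne).mono inter_subset_left inter_subset_left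
  rw [inter_comm, biUnion_inter, card_biUnion hdisj,
    sum_congr rfl fun π hπ => (hM.2.2.2.1 π hπ).1, sum_const, hM.1, smul_eq_mul, mul_one]

lemma sdiff_biUnion_arcSet_subset (hM : IsFeasibleMatching p q A M)
    (hA : A ⊆ Icc 1 (p + q)) (hAcard : A.card = p) :
    Icc 1 (p + q) \ M.biUnion arcSet ⊆ A := by
  have hU := hM.biUnion_arcSet_subset
  have hUcard := hM.card_biUnion_arcSet
  have hIcc : (Icc 1 (p + q)).card = p + q := by simp
  have hqp : 2 * q ≤ p + q := hUcard ▸ hIcc ▸ card_le_card hU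
  have hfree : (A \ M.biUnion arcSet).card = p - q := by
    have := card_sdiff_add_card_inter A (M.biUnion arcSet)
    have := hM.card_inter_biUnion_arcSet
    omega
  have heq : A \ M.biUnion arcSet = Icc 1 (p + q) \ M.biUnion arcSet :=
    eq_of_subset_of_card_le (sdiff_subset_sdiff hA le_rfl)
      (by rw [card_sdiff_of_subset hU, hIcc, hUcard, hfree]; omega)
  exact heq ▸ sdiff_subset

lemma fst_mem_iff_snd_notMem (hM : IsFeasibleMatching p q A M) {π : ℕ × ℕ} (hπ : π ∈ M) :
    π.1 ∈ A ↔ π.2 ∉ A :=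
  (card_pair_inter_eq_one_iff (hM.2.1 π hπ).2.1.ne).mp (hM.2.2.2.1 π hπ).1

end IsFeasibleMatching

section SameMatching

variable {p q : ℕ} {A A' : Finset ℕ} {M : Finset (ℕ × ℕ)}

lemma symmDiff_subset_biUnion_arcSet (hA : A ⊆ Icc 1 (p + q)) (hAcard : A.card = p)
    (hA' : A' ⊆ Icc 1 (p + q)) (hA'card : A'.card = p)
    (hM : IsFeasibleMatching p q A M) (hM' : IsFeasibleMatching p q A' M) :
    symmDiff A A' ⊆ M.biUnion arcSet := by
  intro k hk
  by_contra hkU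
  have hfree := hM.sdiff_biUnion_arcSet_subset hA hAcard
  have hfree' := hM'.sdiff_biUnion_arcSet_subset hA' hA'card
  rcases mem_symmDiff.mp hk with ⟨hkA, hkA'⟩ | ⟨hkA', hkA⟩
  · exact hkA' (hfree' (mem_sdiff.mpr ⟨hA hkA, hkU⟩))
  · exact hkA (hfree (mem_sdiff.mpr ⟨hA' hkA', hkU⟩))

lemma fst_mem_symmDiff_iff_snd (hM : IsFeasibleMatching p q A M)
    (hM' : IsFeasibleMatching p q A' M) {π : ℕ × ℕ} (hπ : π ∈ M) :
    π.1 ∈ symmDiff A A' ↔ π.2 ∈ symmDiff A A' := by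
  have := hM.fst_mem_iff_snd_notMem hπ
  have := hM'.fst_mem_iff_snd_notMem hπ
  simp only [mem_symmDiff]
  tauto

lemma symmDiff_eq_biUnion_arcSet (hA : A ⊆ Icc 1 (p + q)) (hAcard : A.card = p)
    (hA' : A' ⊆ Icc 1 (p + q)) (hA'card : A'.card = p)
    (hM : IsFeasibleMatching p q A M) (hM' : IsFeasibleMatching p q A' M) :
    symmDiff A A' = (M.filter (fun π => π.1 ∈ symmDiff A A')).biUnion arcSet := by
  have hcover := symmDiff_subset_biUnion_arcSet hA hAcard hA' hA'card hM hM'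
  ext k
  simp only [mem_biUnion, mem_filter, arcSet, mem_insert, mem_singleton]
  constructor
  · intro hk
    obtain ⟨π, hπ, hkπ⟩ := mem_biUnion.mp (hcover hk)
    simp only [arcSet, mem_insert, mem_singleton] at hkπ
    rcases hkπ with rfl | rfl
    · exact ⟨π, ⟨hπ, hk⟩, .inl rfl⟩
    · exact ⟨π, ⟨hπ, (fst_mem_symmDiff_iff_snd hM hM' hπ).mpr hk⟩, .inr rfl⟩
  · rintro ⟨π, ⟨hπ, hπD⟩, rfl | rfl⟩
    · exact hπD
    · exact (fst_mem_symmDiff_iff_snd hM hM' hπ).mp hπD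

end SameMatching

/-- If `M` is a feasible matching for both `p`-subsets `A` and `A'` of `[p+q]`, then
`A'` is obtained from `A` by the exchange operation with respect to some `Π ⊆ M`. -/
theorem stmt4 (p q : ℕ) (A A' : Finset ℕ)
    (hA : A ⊆ Finset.Icc 1 (p + q)) (hAcard : A.card = p)
    (hA' : A' ⊆ Finset.Icc 1 (p + q)) (hA'card : A'.card = p)
    (M : Finset (ℕ × ℕ))
    (hM : IsFeasibleMatching p q A M) (hM' : IsFeasibleMatching p q A' M) :
    ∃ Pset ⊆ M, A' = symmDiff A (Pset.biUnion arcSet) := by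
  refine ⟨M.filter (fun π => π.1 ∈ symmDiff A A'), filter_subset _ _, ?_⟩
  rw [← symmDiff_eq_biUnion_arcSet hA hAcard hA' hA'card hM hM', symmDiff_symmDiff_cancel_left]
end

section
/- Let M be a nested set of q pairwise disjoint arcs in [p+q] such that each arc of M contains exactly one element of A and one of the complement of A, for a p-subset A, and no free element is covered. If an arc (i,j) ∈ M has j - i > 1, then there exists a 'short' arc (k, k+1) ∈ M with i ≤ k < k+1 ≤ j. In particular, every feasible matching contains at least one short arc. -/
open Finset

/-- In a feasible matching, every arc `(i,j)` with `j - i > 1` contains a short arc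
`(k,k+1)` with `i ≤ k < k+1 ≤ j`; in particular (when `q ≥ 1`) every feasible
matching contains at least one short arc. -/
theorem stmt5 (p q : ℕ) (A : Finset ℕ) (hA : A ⊆ Finset.Icc 1 (p + q))
    (hAcard : A.card = p) (M : Finset (ℕ × ℕ))
    (hM : IsFeasibleMatching p q A M) :
    (∀ π ∈ M, 1 < π.2 - π.1 →
        ∃ k : ℕ, (k, k + 1) ∈ M ∧ π.1 ≤ k ∧ k + 1 ≤ π.2) ∧
    (1 ≤ q → ∃ k : ℕ, (k, k + 1) ∈ M) := by
  obtain ⟨hcard, hbound, hdisj, hcount, hnest, hfree⟩ := hM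
  have main : ∀ n : ℕ, ∀ i j : ℕ, j - i = n → (i, j) ∈ M → 1 < j - i →
      ∃ k : ℕ, (k, k + 1) ∈ M ∧ i ≤ k ∧ k + 1 ≤ j := by
    intro n
    induction n using Nat.strong_induction_on with
    | _ n IH =>
      intro i j hn hmem hlen
      have hb := hbound _ hmem
      simp only at hb
      have hij : i + 2 ≤ j := by omega
      -- i+1 is covered by the interval of (i,j), so it is an endpoint of some arc
      have hcov : ∃ π' ∈ M, i + 1 ∈ arcSet π' := by
        by_contra hcon
        push_neg at hcon
        have := hfree (i + 1) (by simp [Finset.mem_Icc]; omega) hcon (i, j) hmem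
        simp [Finset.mem_Icc] at this
        omega
      obtain ⟨π', hπ', hend⟩ := hcov
      have hb' := hbound _ hπ'
      have hendcases : π'.1 = i + 1 ∨ π'.2 = i + 1 := by
        have := hend
        simp [arcSet] at this
        omega
      have hne : (i, j) ≠ π' := by
        intro h
        rw [← h] at hendcases
        simp at hendcases
        omega
      have hdisj' := hdisj _ hmem _ hπ' hne
      have hnd : ¬ Disjoint (Finset.Icc (i,j).1 (i,j).2) (Finset.Icc π'.1 π'.2) := by
        intro h
        have h1 : (i + 1 : ℕ) ∈ Finset.Icc i j := by simp [Finset.mem_Icc]; omega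
        have h2 : (i + 1 : ℕ) ∈ Finset.Icc π'.1 π'.2 := by
          simp [Finset.mem_Icc]; omega
        exact Finset.disjoint_left.mp h h1 h2
      have hsub : Finset.Icc π'.1 π'.2 ⊆ Finset.Icc i j := by
        rcases hnest _ hmem _ hπ' with h | h | h
        · exact absurd h hnd
        · exfalso
          have hi : (i : ℕ) ∈ Finset.Icc π'.1 π'.2 := h (by simp [Finset.mem_Icc]; omega)
          have hj : (j : ℕ) ∈ Finset.Icc π'.1 π'.2 := h (by simp [Finset.mem_Icc]; omega)
          simp [Finset.mem_Icc] at hi hj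
          omega
        · exact h
      have h1' : π'.1 ∈ Finset.Icc i j := hsub (by simp [Finset.mem_Icc]; omega)
      have h2' : π'.2 ∈ Finset.Icc i j := hsub (by simp [Finset.mem_Icc]; omega)
      simp [Finset.mem_Icc] at h1' h2'
      have hfst : π'.1 = i + 1 := by
        rcases hendcases with h | h
        · exact h
        · exfalso
          have hp1 : π'.1 = i := by omega
          rw [Finset.disjoint_left] at hdisj'
          exact hdisj' (show (i : ℕ) ∈ arcSet (i, j) by simp [arcSet])
            (by simp [arcSet, ← hp1])
      by_cases hshort : π'.2 = i + 2
      · refine ⟨i + 1, ?_, by omega, by omega⟩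
        have : π' = (i + 1, i + 1 + 1) := by
          ext <;> simp [hfst, hshort]
        rwa [this] at hπ'
      · have hlen' : 1 < π'.2 - π'.1 := by omega
        have hmem' : (π'.1, π'.2) ∈ M := by simpa using hπ'
        obtain ⟨k, hk, hk1, hk2⟩ :=
          IH (π'.2 - π'.1) (by omega) π'.1 π'.2 rfl hmem' hlen'
        exact ⟨k, hk, by omega, by omega⟩
  constructor
  · intro π hπ hlen
    exact main (π.2 - π.1) π.1 π.2 rfl (by simpa using hπ) hlen
  · intro hq
    have hne : M.Nonempty := by
      rw [← Finset.card_pos, hcard]; omega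
    obtain ⟨π, hπ⟩ := hne
    have hb := hbound _ hπ
    by_cases h : π.2 = π.1 + 1
    · refine ⟨π.1, ?_⟩
      have : π = (π.1, π.1 + 1) := by ext <;> simp [h]
      rwa [this] at hπ
    · obtain ⟨k, hk, _, _⟩ := main (π.2 - π.1) π.1 π.2 rfl (by simpa using hπ)
        (by omega)
      exact ⟨k, hk⟩
end

section
/- In any feasible matching M for a p-subset A of [p+q], the interval [i..j] spanned by each arc (i,j) ∈ M is partitioned exactly into arcs of M; consequently j - i is odd for every arc (i,j) ∈ M. -/
open Finset

/-!
A point of the interval `[i..j]` of an arc cannot be free, so it is an endpoint of some arc,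
unique since endpoint sets are disjoint. That arc lies inside `[i..j]`: otherwise nesting would
put `[i..j]` strictly inside it, and the point could not be one of its endpoints. Hence `[i..j]`
is a disjoint union of two-element sets, and `j - i + 1` is even.
-/

lemma arcSet_subset_Icc {π : ℕ × ℕ} (h : π.1 ≤ π.2) : arcSet π ⊆ Icc π.1 π.2 := by
  intro k hk
  simp only [arcSet, mem_insert, mem_singleton] at hk
  simp only [mem_Icc]
  omega

lemma card_arcSet {π : ℕ × ℕ} (h : π.1 ≠ π.2) : #(arcSet π) = 2 :=
  card_pair h

lemma card_biUnion_arcSet {S : Finset (ℕ × ℕ)} (hS : ∀ π ∈ S, π.1 ≠ π.2)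
    (hdisj : (S : Set (ℕ × ℕ)).PairwiseDisjoint arcSet) :
    #(S.biUnion arcSet) = 2 * #S := by
  rw [card_biUnion hdisj, sum_congr rfl fun π hπ => card_arcSet (hS π hπ), sum_const,
    smul_eq_mul, mul_comm]

lemma arcSet_subset_Icc_of_noncrossing {π π' : ℕ × ℕ} (hπ : π.1 < π.2) (hπ' : π'.1 < π'.2)
    (hdisj : Disjoint (arcSet π') (arcSet π))
    (hnest : Disjoint (Icc π'.1 π'.2) (Icc π.1 π.2) ∨ Icc π'.1 π'.2 ⊆ Icc π.1 π.2 ∨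
      Icc π.1 π.2 ⊆ Icc π'.1 π'.2)
    {k : ℕ} (hk : k ∈ arcSet π') (hkπ : k ∈ Icc π.1 π.2) : arcSet π' ⊆ Icc π.1 π.2 := by
  rcases hnest with hsep | hin | hout
  · exact absurd hkπ (disjoint_left.mp hsep (arcSet_subset_Icc hπ'.le hk))
  · exact (arcSet_subset_Icc hπ'.le).trans hin
  · rw [Icc_subset_Icc_iff hπ.le] at hout
    have h1 : π'.1 ≠ π.1 := fun h =>
      disjoint_left.mp hdisj (show π'.1 ∈ arcSet π' by simp [arcSet]) (by simp [arcSet, h])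
    have h2 : π'.2 ≠ π.2 := fun h =>
      disjoint_left.mp hdisj (show π'.2 ∈ arcSet π' by simp [arcSet]) (by simp [arcSet, h])
    simp only [arcSet, mem_insert, mem_singleton] at hk
    simp only [mem_Icc] at hkπ
    omega

namespace IsFeasibleMatching

variable {p q : ℕ} {A : Finset ℕ} {M : Finset (ℕ × ℕ)}

lemma fst_lt_snd (hM : IsFeasibleMatching p q A M) {π : ℕ × ℕ} (hπ : π ∈ M) : π.1 < π.2 :=
  (hM.2.1 π hπ).2.1

lemma exists_mem_arcSet (hM : IsFeasibleMatching p q A M) {π : ℕ × ℕ} (hπ : π ∈ M) {k : ℕ}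
    (hk : k ∈ Icc π.1 π.2) : ∃ π' ∈ M, k ∈ arcSet π' := by
  obtain ⟨-, hrange, -, -, -, hfree⟩ := hM
  have hk' : k ∈ Icc 1 (p + q) := by
    obtain ⟨h1, -, h2⟩ := hrange π hπ
    simp only [mem_Icc] at hk ⊢
    omega
  by_contra! hcov
  exact hfree k hk' hcov π hπ hk

lemma arcSet_subset_Icc_of_mem (hM : IsFeasibleMatching p q A M) {π π' : ℕ × ℕ} (hπ : π ∈ M)
    (hπ' : π' ∈ M) {k : ℕ} (hk : k ∈ arcSet π') (hkπ : k ∈ Icc π.1 π.2) :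
    arcSet π' ⊆ Icc π.1 π.2 := by
  obtain rfl | hne := eq_or_ne π' π
  · exact arcSet_subset_Icc (hM.fst_lt_snd hπ').le
  · exact arcSet_subset_Icc_of_noncrossing (hM.fst_lt_snd hπ) (hM.fst_lt_snd hπ')
      (hM.2.2.1 π' hπ' π hπ hne) (hM.2.2.2.2.1 π' hπ' π hπ) hk hkπ

lemma pairwiseDisjoint_arcSet (hM : IsFeasibleMatching p q A M) :
    (M : Set (ℕ × ℕ)).PairwiseDisjoint arcSet :=
  fun π hπ π' hπ' hne => hM.2.2.1 π hπ π' hπ' hne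

lemma existsUnique_mem_arcSet (hM : IsFeasibleMatching p q A M) {π : ℕ × ℕ} (hπ : π ∈ M)
    {k : ℕ} (hk : k ∈ Icc π.1 π.2) : ∃! π' : ℕ × ℕ, π' ∈ M ∧ k ∈ arcSet π' := by
  obtain ⟨π', hπ', hkπ'⟩ := hM.exists_mem_arcSet hπ hk
  refine ⟨π', ⟨hπ', hkπ'⟩, fun π'' ⟨hπ'', hkπ''⟩ => ?_⟩
  by_contra hne
  exact disjoint_left.mp (hM.pairwiseDisjoint_arcSet hπ'' hπ' hne) hkπ'' hkπ'

lemma Icc_eq_biUnion_arcSet (hM : IsFeasibleMatching p q A M) {π : ℕ × ℕ} (hπ : π ∈ M) :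
    Icc π.1 π.2 = (M.filter fun π' => arcSet π' ⊆ Icc π.1 π.2).biUnion arcSet := by
  ext k
  simp only [mem_biUnion, mem_filter]
  constructor
  · intro hk
    obtain ⟨π', hπ', hkπ'⟩ := hM.exists_mem_arcSet hπ hk
    exact ⟨π', ⟨hπ', hM.arcSet_subset_Icc_of_mem hπ hπ' hkπ' hk⟩, hkπ'⟩
  · rintro ⟨π', ⟨-, hsub⟩, hkπ'⟩
    exact hsub hkπ'

end IsFeasibleMatching

theorem stmt6_general (p q : ℕ) (A : Finset ℕ) (M : Finset (ℕ × ℕ))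
    (hM : IsFeasibleMatching p q A M) (π : ℕ × ℕ) (hπ : π ∈ M) :
    Finset.Icc π.1 π.2 =
      (M.filter (fun π' => arcSet π' ⊆ Finset.Icc π.1 π.2)).biUnion arcSet ∧
    (∀ k ∈ Finset.Icc π.1 π.2, ∃! π' : ℕ × ℕ, π' ∈ M ∧ k ∈ arcSet π') ∧
    Odd (π.2 - π.1) := by
  have hpart := hM.Icc_eq_biUnion_arcSet hπ
  refine ⟨hpart, fun k hk => hM.existsUnique_mem_arcSet hπ hk, ?_⟩
  set S := M.filter fun π' => arcSet π' ⊆ Icc π.1 π.2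
  have hcard : #(S.biUnion arcSet) = 2 * #S :=
    card_biUnion_arcSet (fun π' hπ' => (hM.fst_lt_snd (mem_filter.mp hπ').1).ne)
      (hM.pairwiseDisjoint_arcSet.subset (coe_subset.mpr (filter_subset _ M)))
  rw [← hpart, Nat.card_Icc] at hcard
  have hlt := hM.fst_lt_snd hπ
  exact ⟨#S - 1, by omega⟩

/-- In a feasible matching `M` for a `p`-subset `A` of `[p+q]`, the interval `[i..j]`
of each arc `(i,j) ∈ M` is partitioned exactly into arcs of `M` (it is the disjoint
union of the endpoint-sets of the arcs of `M` lying inside it, and every element of the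
interval lies in exactly one arc of `M`); consequently `j - i` is odd. -/
theorem stmt6 (p q : ℕ) (A : Finset ℕ) (hA : A ⊆ Finset.Icc 1 (p + q))
    (hAcard : A.card = p) (M : Finset (ℕ × ℕ))
    (hM : IsFeasibleMatching p q A M) (π : ℕ × ℕ) (hπ : π ∈ M) :
    Finset.Icc π.1 π.2 =
      (M.filter (fun π' => arcSet π' ⊆ Finset.Icc π.1 π.2)).biUnion arcSet ∧
    (∀ k ∈ Finset.Icc π.1 π.2, ∃! π' : ℕ × ℕ, π' ∈ M ∧ k ∈ arcSet π') ∧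
    Odd (π.2 - π.1) :=
  stmt6_general p q A M hM π hπ
end

section
/- Let M be a feasible matching for a p-subset A of [p+q], let (i,j) ∈ M be an arc, and set A' = A △ {i,j}. Then the sums Σ(A) = Σ_{a∈A} a and Σ(A') differ by an odd number. In particular, exchanging along a single arc always changes the parity of the element-sum of the set. -/
open Finset

/-!
The open interval strictly inside an arc `(i,j)` of a feasible matching is partitioned by the
endpoint pairs of arcs: each of its points is an endpoint of some arc (no free element is
covered), and that arc lies strictly inside `(i,j)` (arcs are nested or apart and have disjoint
endpoints). Hence `j - i - 1` is even. Since `Σ(A △ B) + 2 Σ(A ∩ B) = Σ(A) + Σ(B)`, the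
difference `Σ(A) - Σ(A △ {i,j})` has the parity of `i + j`, i.e. of `j - i`.
-/

theorem Finset.sum_symmDiff_add_two_nsmul_sum_inter {ι M : Type*} [DecidableEq ι]
    [AddCommMonoid M] (s t : Finset ι) (f : ι → M) :
    ∑ x ∈ symmDiff s t, f x + 2 • ∑ x ∈ s ∩ t, f x = ∑ x ∈ s, f x + ∑ x ∈ t, f x := by
  rw [Finset.symmDiff_def, sum_union disjoint_sdiff_sdiff, two_nsmul,
    ← sum_inter_add_sum_sdiff s t, ← sum_inter_add_sum_sdiff t s, inter_comm t s]
  abel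

theorem even_card_biUnion_arcSet {T : Finset (ℕ × ℕ)} (hT : ∀ π ∈ T, π.1 ≠ π.2)
    (hdisj : (T : Set (ℕ × ℕ)).PairwiseDisjoint arcSet) : Even (T.biUnion arcSet).card := by
  have hcard : ∀ π ∈ T, (arcSet π).card = 2 := fun π hπ => card_pair (hT π hπ)
  rw [card_biUnion hdisj, sum_congr rfl hcard, sum_const, smul_eq_mul]
  exact even_two.mul_left _

namespace IsFeasibleMatching

variable {p q : ℕ} {A : Finset ℕ} {M : Finset (ℕ × ℕ)}

theorem exists_mem_arcSet_of_mem_Ioo (hM : IsFeasibleMatching p q A M) {π : ℕ × ℕ}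
    (hπ : π ∈ M) {k : ℕ} (hk : k ∈ Ioo π.1 π.2) : ∃ π' ∈ M, k ∈ arcSet π' := by
  obtain ⟨-, hbounds, -, -, -, hcovered⟩ := hM
  obtain ⟨h1, -, h2⟩ := hbounds π hπ
  rw [mem_Ioo] at hk
  by_contra! hfree
  exact hcovered k (mem_Icc.2 ⟨by omega, by omega⟩) hfree π hπ
    (mem_Icc.2 ⟨hk.1.le, hk.2.le⟩)

theorem arcSet_subset_Ioo (hM : IsFeasibleMatching p q A M) {π π' : ℕ × ℕ} (hπ : π ∈ M)
    (hπ' : π' ∈ M) {k : ℕ} (hkπ' : k ∈ arcSet π') (hk : k ∈ Ioo π.1 π.2) :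
    arcSet π' ⊆ Ioo π.1 π.2 := by
  obtain ⟨-, hbounds, hdisj, -, hnested, -⟩ := hM
  have hne : π ≠ π' := by
    rintro rfl
    simp only [arcSet, mem_insert, mem_singleton, mem_Ioo] at hkπ' hk
    omega
  have hends : π'.1 ∉ arcSet π ∧ π'.2 ∉ arcSet π := by
    have := disjoint_right.1 (hdisj π hπ π' hπ' hne)
    exact ⟨this (by simp [arcSet]), this (by simp [arcSet])⟩
  have hlt' := (hbounds π' hπ').2.1
  simp only [arcSet, mem_insert, mem_singleton, not_or] at hkπ' hends
  simp only [mem_Ioo] at hk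
  rcases hnested π hπ π' hπ' with hapart | hπ_in | hπ'_in
  · exact (disjoint_left.1 hapart (mem_Icc.2 ⟨hk.1.le, hk.2.le⟩)
      (mem_Icc.2 ⟨by omega, by omega⟩)).elim
  · have h1 := mem_Icc.1 (hπ_in (left_mem_Icc.2 (hbounds π hπ).2.1.le))
    have h2 := mem_Icc.1 (hπ_in (right_mem_Icc.2 (hbounds π hπ).2.1.le))
    omega
  · have h1 := mem_Icc.1 (hπ'_in (left_mem_Icc.2 hlt'.le))
    have h2 := mem_Icc.1 (hπ'_in (right_mem_Icc.2 hlt'.le))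
    intro x hx
    simp only [arcSet, mem_insert, mem_singleton] at hx
    rw [mem_Ioo]
    omega

theorem Ioo_eq_biUnion_arcSet (hM : IsFeasibleMatching p q A M) {π : ℕ × ℕ} (hπ : π ∈ M) :
    Ioo π.1 π.2 = (M.filter fun π' => arcSet π' ⊆ Ioo π.1 π.2).biUnion arcSet := by
  ext k
  simp only [mem_biUnion, mem_filter]
  refine ⟨fun hk => ?_, fun ⟨_, ⟨_, hsub⟩, hk⟩ => hsub hk⟩
  obtain ⟨π', hπ', hkπ'⟩ := hM.exists_mem_arcSet_of_mem_Ioo hπ hk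
  exact ⟨π', ⟨hπ', hM.arcSet_subset_Ioo hπ hπ' hkπ' hk⟩, hkπ'⟩

theorem odd_sub (hM : IsFeasibleMatching p q A M) {π : ℕ × ℕ} (hπ : π ∈ M) :
    Odd (π.2 - π.1) := by
  have hlt := (hM.2.1 π hπ).2.1
  have heven : Even (Ioo π.1 π.2).card := by
    rw [hM.Ioo_eq_biUnion_arcSet hπ]
    refine even_card_biUnion_arcSet (fun π' hπ' => ?_) fun π₁ h₁ π₂ h₂ hne => ?_
    · exact (hM.2.1 π' (mem_filter.1 hπ').1).2.1.ne
    · exact hM.2.2.1 π₁ (mem_filter.1 h₁).1 π₂ (mem_filter.1 h₂).1 hne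
  rw [Nat.card_Ioo] at heven
  obtain ⟨m, hm⟩ := heven
  exact ⟨m, by omega⟩

end IsFeasibleMatching

theorem stmt7_general (p q : ℕ) (A : Finset ℕ) (M : Finset (ℕ × ℕ))
    (hM : IsFeasibleMatching p q A M) (π : ℕ × ℕ) (hπ : π ∈ M) :
    Odd ((∑ a ∈ A, (a : ℤ)) - ∑ a ∈ symmDiff A (arcSet π), (a : ℤ)) := by
  have hlt := (hM.2.1 π hπ).2.1
  obtain ⟨m, hm⟩ := hM.odd_sub hπ
  have hpair : ∑ a ∈ arcSet π, (a : ℤ) = π.1 + π.2 := sum_pair hlt.ne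
  have hsum := sum_symmDiff_add_two_nsmul_sum_inter A (arcSet π) (fun a => (a : ℤ))
  rw [hpair, two_nsmul] at hsum
  have hdiff : (π.2 : ℤ) = π.1 + (2 * m + 1) := by omega
  exact ⟨∑ a ∈ A ∩ arcSet π, (a : ℤ) - π.1 - m - 1, by linarith⟩

/-- Exchanging a `p`-subset `A` of `[p+q]` along a single arc `(i,j)` of a feasible
matching for `A` changes the parity of the element-sum: `Σ(A) - Σ(A △ {i,j})` is odd. -/
theorem stmt7 (p q : ℕ) (A : Finset ℕ) (hA : A ⊆ Finset.Icc 1 (p + q))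
    (hAcard : A.card = p) (M : Finset (ℕ × ℕ))
    (hM : IsFeasibleMatching p q A M) (π : ℕ × ℕ) (hπ : π ∈ M) :
    Odd ((∑ a ∈ A, (a : ℤ)) - ∑ a ∈ symmDiff A (arcSet π), (a : ℤ)) :=
  stmt7_general p q A M hM π hπ
end

section
/- Let M be a feasible matching for a p-subset A of [p+q] with p ≥ q. Then any feasible matching contains an arc (i, i+1) with i ≤ p. (Equivalently: there is at least one short arc whose left endpoint is at most p, since at most q−1 < q arcs can have both endpoints greater than p+1.) -/
open Finset

/-- Any feasible matching `M` for a `p`-subset `A` of `[p+q]` with `p ≥ q (≥ 1)`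
contains a short arc `(i, i+1)` with `i ≤ p`. -/
theorem stmt11 (p q : ℕ) (hq : 1 ≤ q) (hpq : q ≤ p)
    (A : Finset ℕ) (hA : A ⊆ Finset.Icc 1 (p + q)) (hAcard : A.card = p)
    (M : Finset (ℕ × ℕ)) (hM : IsFeasibleMatching p q A M) :
    ∃ i : ℕ, (i, i + 1) ∈ M ∧ i ≤ p := by
  obtain ⟨hcard, hbound, hdisj, hAB, hnest, hfree⟩ := hM
  -- Step: every non-short arc contains an arc starting at π.1 + 1, strictly inside.
  have step : ∀ π ∈ M, π.1 + 1 < π.2 → ∃ σ ∈ M, σ.1 = π.1 + 1 ∧ σ.2 + 1 ≤ π.2 := by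
    intro π hπ hlt
    obtain ⟨h1, h2, h3⟩ := hbound π hπ
    have hk : π.1 + 1 ∈ Finset.Icc 1 (p + q) := by simp [Finset.mem_Icc]; omega
    by_cases hex : ∃ σ ∈ M, π.1 + 1 ∈ arcSet σ
    · obtain ⟨σ, hσ, hkσ⟩ := hex
      obtain ⟨hb1, hb2, hb3⟩ := hbound σ hσ
      simp only [arcSet, Finset.mem_insert, Finset.mem_singleton] at hkσ
      have hne : σ ≠ π := by
        rintro rfl; omega
      have hd := hdisj σ hσ π hπ hne
      have hd1 : σ.1 ≠ π.1 ∧ σ.1 ≠ π.2 := by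
        have := Finset.disjoint_left.1 hd (show σ.1 ∈ arcSet σ by simp [arcSet])
        simp [arcSet] at this; exact this
      have hd2 : σ.2 ≠ π.1 ∧ σ.2 ≠ π.2 := by
        have := Finset.disjoint_left.1 hd (show σ.2 ∈ arcSet σ by simp [arcSet])
        simp [arcSet] at this; exact this
      rcases hnest σ hσ π hπ with h | h | h
      · exfalso
        have hmem1 : π.1 + 1 ∈ Finset.Icc σ.1 σ.2 := by simp [Finset.mem_Icc]; omega
        have hmem2 : π.1 + 1 ∈ Finset.Icc π.1 π.2 := by simp [Finset.mem_Icc]; omega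
        exact Finset.disjoint_left.1 h hmem1 hmem2
      · -- Icc σ ⊆ Icc π
        have hs1 : π.1 ≤ σ.1 ∧ σ.1 ≤ π.2 := by
          have := h (by simp [Finset.mem_Icc]; omega : σ.1 ∈ Finset.Icc σ.1 σ.2)
          simpa [Finset.mem_Icc] using this
        have hs2 : π.1 ≤ σ.2 ∧ σ.2 ≤ π.2 := by
          have := h (by simp [Finset.mem_Icc]; omega : σ.2 ∈ Finset.Icc σ.1 σ.2)
          simpa [Finset.mem_Icc] using this
        exact ⟨σ, hσ, by omega, by omega⟩
      · -- Icc π ⊆ Icc σ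
        exfalso
        have hs1 : σ.1 ≤ π.1 ∧ π.1 ≤ σ.2 := by
          have := h (by simp [Finset.mem_Icc]; omega : π.1 ∈ Finset.Icc π.1 π.2)
          simpa [Finset.mem_Icc] using this
        have hs2 : σ.1 ≤ π.2 ∧ π.2 ≤ σ.2 := by
          have := h (by simp [Finset.mem_Icc]; omega : π.2 ∈ Finset.Icc π.1 π.2)
          simpa [Finset.mem_Icc] using this
        omega
    · exfalso
      push_neg at hex
      have := hfree (π.1 + 1) hk (fun σ hσ => hex σ hσ) π hπ
      simp [Finset.mem_Icc] at this
      omega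
  -- Lemma B: every arc yields a short arc (i, i+1) with 2i + 1 ≤ π.1 + π.2.
  have B : ∀ n : ℕ, ∀ π ∈ M, π.2 - π.1 ≤ n →
      ∃ i : ℕ, (i, i + 1) ∈ M ∧ 2 * i + 1 ≤ π.1 + π.2 := by
    intro n
    induction n with
    | zero =>
      intro π hπ h0
      have := hbound π hπ
      exact absurd h0 (by omega)
    | succ n ih =>
      intro π hπ hle
      obtain ⟨h1, h2, h3⟩ := hbound π hπ
      by_cases hs : π.2 = π.1 + 1
      · refine ⟨π.1, ?_, by omega⟩
        have : (π.1, π.1 + 1) = π := by rw [← hs]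
        rwa [this]
      · have hlt : π.1 + 1 < π.2 := by omega
        obtain ⟨σ, hσ, hσ1, hσ2⟩ := step π hπ hlt
        obtain ⟨i, hi, hile⟩ := ih σ hσ (by omega)
        exact ⟨i, hi, by omega⟩
  -- Some arc has small endpoint sum.
  have low : ∃ π ∈ M, π.1 + π.2 ≤ 2 * p + 1 := by
    by_contra hcon
    push_neg at hcon
    have hsub : M.biUnion arcSet ⊆ Finset.Icc (p + 2 - q) (p + q) := by
      intro x hx
      simp only [Finset.mem_biUnion] at hx
      obtain ⟨π, hπ, hxπ⟩ := hx
      have hb := hbound π hπ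
      have hl := hcon π hπ
      simp only [arcSet, Finset.mem_insert, Finset.mem_singleton] at hxπ
      simp only [Finset.mem_Icc]
      omega
    have hcard2 : (M.biUnion arcSet).card = 2 * q := by
      rw [Finset.card_biUnion (fun π hπ π' hπ' hne => hdisj π hπ π' hπ' hne)]
      have h2 : ∀ π ∈ M, (arcSet π).card = 2 := by
        intro π hπ
        have hb := hbound π hπ
        exact Finset.card_pair (by omega)
      rw [Finset.sum_congr rfl h2, Finset.sum_const, hcard]
      ring
    have hle := Finset.card_le_card hsub
    rw [hcard2, Nat.card_Icc] at hle
    omega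
  obtain ⟨π, hπ, hlow⟩ := low
  obtain ⟨i, hi, hile⟩ := B (π.2 - π.1) π hπ le_rfl
  exact ⟨i, hi, by omega⟩
end

section
/- Let f : 2^[n] → 𝔖 be a function with values in a commutative semiring with division satisfying the SP3-relation: f(Xik) ⊙ f(Xj) = (f(Xij) ⊙ f(Xk)) ⊕ (f(Xjk) ⊙ f(Xi)) for all i < j < k and X ⊆ [n] − {i,j,k}. Then f is uniquely determined by its values on intervals: if f, g both satisfy the SP3-relation and agree on all intervals [p..q] ⊆ [n] (and on ∅), then f = g. -/
lemma aux_span18 {B : Finset ℕ} (hB : B.Nonempty) {lo hi : ℕ}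
    (h : B ⊆ Finset.Icc lo hi) : B.max' hB ≤ hi ∧ lo ≤ B.min' hB :=
  ⟨Finset.max'_le _ _ _ (fun x hx => (Finset.mem_Icc.mp (h hx)).2),
   Finset.le_min' _ _ _ (fun x hx => (Finset.mem_Icc.mp (h hx)).1)⟩

/-- A function `f : 2^[n] → 𝔖` into a commutative semiring with division
(`(𝔖,⊙)` an abelian group, `⊕` commutative and associative, `⊙` distributing over `⊕`)
satisfying the SP3-relation
`f(Xik) ⊙ f(Xj) = (f(Xij) ⊙ f(Xk)) ⊕ (f(Xjk) ⊙ f(Xi))` for all `i < j < k` in `[n]`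
and `X ⊆ [n] \ {i,j,k}` is determined by its values on the intervals `[p..q] ⊆ [n]`
(and on `∅`): two such functions agreeing on all intervals agree on all subsets of `[n]`. -/
theorem stmt18 {S : Type*} [CommGroup S] (oplus : S → S → S)
    (hcomm : ∀ a b : S, oplus a b = oplus b a)
    (hassoc : ∀ a b c : S, oplus (oplus a b) c = oplus a (oplus b c))
    (hdistrib : ∀ a b c : S, a * oplus b c = oplus (a * b) (a * c))
    (n : ℕ) (f g : Finset ℕ → S)
    (hf : ∀ i j k : ℕ, ∀ X : Finset ℕ, 1 ≤ i → i < j → j < k → k ≤ n →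
        X ⊆ Finset.Icc 1 n → i ∉ X → j ∉ X → k ∉ X →
        f (X ∪ {i, k}) * f (X ∪ {j}) =
          oplus (f (X ∪ {i, j}) * f (X ∪ {k})) (f (X ∪ {j, k}) * f (X ∪ {i})))
    (hg : ∀ i j k : ℕ, ∀ X : Finset ℕ, 1 ≤ i → i < j → j < k → k ≤ n →
        X ⊆ Finset.Icc 1 n → i ∉ X → j ∉ X → k ∉ X →
        g (X ∪ {i, k}) * g (X ∪ {j}) =
          oplus (g (X ∪ {i, j}) * g (X ∪ {k})) (g (X ∪ {j, k}) * g (X ∪ {i})))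
    (hint : ∀ a b : ℕ, 1 ≤ a → b ≤ n → f (Finset.Icc a b) = g (Finset.Icc a b))
    (hempty : f ∅ = g ∅) :
    ∀ A : Finset ℕ, A ⊆ Finset.Icc 1 n → f A = g A := by
  have key : ∀ d : ℕ, ∀ A : Finset ℕ, A ⊆ Finset.Icc 1 n → ∀ hA : A.Nonempty,
      A.max' hA - A.min' hA ≤ d → f A = g A := by
    intro d
    induction d using Nat.strong_induction_on with
    | _ d ih =>
      intro A hsub hA hspan
      set i := A.min' hA with hi_def
      set k := A.max' hA with hk_def
      have hi_mem : i ∈ A := A.min'_mem hA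
      have hk_mem : k ∈ A := A.max'_mem hA
      have h1i : 1 ≤ i := (Finset.mem_Icc.mp (hsub hi_mem)).1
      have hkn : k ≤ n := (Finset.mem_Icc.mp (hsub hk_mem)).2
      by_cases hAI : A = Finset.Icc i k
      · rw [hAI]; exact hint i k h1i hkn
      · have hAsub : A ⊆ Finset.Icc i k := fun x hx =>
          Finset.mem_Icc.mpr ⟨A.min'_le x hx, A.le_max' x hx⟩
        obtain ⟨j, hjIcc, hjA⟩ := Finset.exists_of_ssubset (hAsub.ssubset_of_ne hAI)
        have hjik := Finset.mem_Icc.mp hjIcc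
        have hij : i < j := lt_of_le_of_ne hjik.1 (fun h => hjA (h ▸ hi_mem))
        have hjk : j < k := lt_of_le_of_ne hjik.2 (fun h => hjA (h ▸ hk_mem))
        set X := (A.erase i).erase k with hX_def
        have hXA : X ⊆ A := (Finset.erase_subset _ _).trans (Finset.erase_subset _ _)
        have hXsub : X ⊆ Finset.Icc 1 n := hXA.trans hsub
        have hiX : i ∉ X := fun h => (Finset.mem_erase.mp (Finset.mem_erase.mp h).2).1 rfl
        have hkX : k ∉ X := fun h => (Finset.mem_erase.mp h).1 rfl
        have hjX : j ∉ X := fun h => hjA (hXA h)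
        have hXbound : ∀ x ∈ X, i < x ∧ x < k := by
          intro x hx
          have hxA := hXA hx
          have h1 := A.min'_le x hxA
          have h2 := A.le_max' x hxA
          have hxk := (Finset.mem_erase.mp hx).1
          have hxi := (Finset.mem_erase.mp (Finset.mem_erase.mp hx).2).1
          omega
        have hXik : X ∪ {i, k} = A := by
          ext x
          simp only [hX_def, Finset.mem_union, Finset.mem_erase, Finset.mem_insert,
            Finset.mem_singleton]
          constructor
          · rintro (⟨_, _, hx⟩ | rfl | rfl) <;> assumption
          · intro hx
            by_cases h1 : x = i
            · exact Or.inr (Or.inl h1)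
            · by_cases h2 : x = k
              · exact Or.inr (Or.inr h2)
              · exact Or.inl ⟨h2, h1, hx⟩
        have step : ∀ (B : Finset ℕ) (lo hi : ℕ), B ⊆ Finset.Icc 1 n →
            B ⊆ Finset.Icc lo hi → B.Nonempty → hi - lo < d → f B = g B := by
          intro B lo hi hs1 hs2 hB hlt
          obtain ⟨hmax, hmin⟩ := aux_span18 hB hs2
          exact ih (hi - lo) hlt B hs1 hB (by omega)
        have hmemn : ∀ x : ℕ, i ≤ x → x ≤ k → x ∈ Finset.Icc 1 n := by
          intro x h1 h2; exact Finset.mem_Icc.mpr ⟨le_trans h1i h1, le_trans h2 hkn⟩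
        have sub1n : ∀ (m : ℕ), i ≤ m → m ≤ k → X ∪ {m} ⊆ Finset.Icc 1 n := by
          intro m h1 h2
          exact Finset.union_subset hXsub (by simpa using hmemn m h1 h2)
        have sub2n : ∀ (m m' : ℕ), i ≤ m → m ≤ k → i ≤ m' → m' ≤ k →
            X ∪ {m, m'} ⊆ Finset.Icc 1 n := by
          intro m m' h1 h2 h3 h4
          refine Finset.union_subset hXsub ?_
          intro x hx
          rcases Finset.mem_insert.mp hx with rfl | hx
          · exact hmemn _ h1 h2
          · rw [Finset.mem_singleton] at hx; exact hx ▸ hmemn _ h3 h4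
        -- the five smaller sets
        have e1 : f (X ∪ {j}) = g (X ∪ {j}) := by
          refine step _ (i+1) (k-1) (sub1n j hij.le hjk.le) ?_ ⟨j, by simp⟩ (by omega)
          intro x hx
          rcases Finset.mem_union.mp hx with hx | hx
          · have := hXbound x hx; simp [Finset.mem_Icc]; omega
          · rw [Finset.mem_singleton] at hx; subst hx; simp [Finset.mem_Icc]; omega
        have e2 : f (X ∪ {i, j}) = g (X ∪ {i, j}) := by
          refine step _ i (k-1) (sub2n i j le_rfl (hij.le.trans hjk.le) hij.le hjk.le) ?_
            ⟨i, by simp⟩ (by omega)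
          intro x hx
          rcases Finset.mem_union.mp hx with hx | hx
          · have := hXbound x hx; simp [Finset.mem_Icc]; omega
          · simp only [Finset.mem_insert, Finset.mem_singleton] at hx
            rcases hx with rfl | rfl <;> (simp [Finset.mem_Icc]; omega)
        have e3 : f (X ∪ {k}) = g (X ∪ {k}) := by
          refine step _ (i+1) k (sub1n k (hij.le.trans hjk.le) le_rfl) ?_ ⟨k, by simp⟩
            (by omega)
          intro x hx
          rcases Finset.mem_union.mp hx with hx | hx
          · have := hXbound x hx; simp [Finset.mem_Icc]; omega
          · rw [Finset.mem_singleton] at hx; subst hx; simp [Finset.mem_Icc]; omega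
        have e4 : f (X ∪ {j, k}) = g (X ∪ {j, k}) := by
          refine step _ (i+1) k (sub2n j k hij.le hjk.le (hij.le.trans hjk.le) le_rfl) ?_
            ⟨k, by simp⟩ (by omega)
          intro x hx
          rcases Finset.mem_union.mp hx with hx | hx
          · have := hXbound x hx; simp [Finset.mem_Icc]; omega
          · simp only [Finset.mem_insert, Finset.mem_singleton] at hx
            rcases hx with rfl | rfl <;> (simp [Finset.mem_Icc]; omega)
        have e5 : f (X ∪ {i}) = g (X ∪ {i}) := by
          refine step _ i (k-1) (sub1n i le_rfl (hij.le.trans hjk.le)) ?_ ⟨i, by simp⟩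
            (by omega)
          intro x hx
          rcases Finset.mem_union.mp hx with hx | hx
          · have := hXbound x hx; simp [Finset.mem_Icc]; omega
          · rw [Finset.mem_singleton] at hx; subst hx; simp [Finset.mem_Icc]; omega
        have hfe := hf i j k X h1i hij hjk hkn hXsub hiX hjX hkX
        have hge := hg i j k X h1i hij hjk hkn hXsub hiX hjX hkX
        rw [hXik] at hfe hge
        rw [e1, e2, e3, e4, e5] at hfe
        exact mul_right_cancel (hfe.trans hge.symm)
  intro A hsub
  rcases A.eq_empty_or_nonempty with rfl | hA
  · exact hempty
  · exact key (A.max' hA - A.min' hA) A hsub hA le_rfl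
end

section
/- For the half-grid Γₙ (vertices (i,j) with 1 ≤ j ≤ i ≤ n, edges ((i,j),(i−1,j)) and ((i,j),(i,j+1)), sources sᵢ=(i,1), sinks tᵢ=(i,i)), and for every nonempty interval I = [q..r] ⊆ [n], there exists exactly one I-flow, and it passes exactly through the vertices (i,j) with j ≤ i ≤ r and 1 ≤ j ≤ r−q+1. Consequently, for any weighting w with values in a commutative semiring, f_w([q..r]) = ⊙_{j ≤ i ≤ r, 1 ≤ j ≤ r−q+1} w(i,j). -/
open Finset Classical

/-- The set of (directed) edges traversed by a path, given as its list of vertices. -/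
noncomputable def pathEdges {V : Type} (p : List V) : Finset (V × V) :=
  (p.zip p.tail).toFinset

/-- `p` is a directed path in the edge set `E`: a nonempty list of distinct vertices
consecutive ones being joined by edges of `E`. -/
def IsDirPath {V : Type} (E : Finset (V × V)) (p : List V) : Prop :=
  p ≠ [] ∧ p.Nodup ∧ p.Chain' (fun u v => (u, v) ∈ E)

/-- The set of edges used by a family of paths. -/
noncomputable def famEdges {V : Type} (Φ : Finset (List V)) : Finset (V × V) :=
  Φ.biUnion pathEdges

/-- The set of vertices used by a family of paths. -/
noncomputable def flowVerts {V : Type} (Φ : Finset (List V)) : Finset V :=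
  Φ.biUnion List.toFinset

/-- A family of pairwise vertex-disjoint directed paths in `E`. -/
def IsPathFamily {V : Type} (E : Finset (V × V)) (Φ : Finset (List V)) : Prop :=
  (∀ p ∈ Φ, IsDirPath E p) ∧
  ∀ p ∈ Φ, ∀ q ∈ Φ, p ≠ q → ∀ v, v ∈ p → v ∉ q

/-- A network: a finite directed edge set on `V` with `n` sources and `n` sinks. -/
structure Network (n : ℕ) (V : Type) where
  E : Finset (V × V)
  src : Fin n → V
  snk : Fin n → V

/-- The edge set `E` is acyclic: no directed cycle. -/
def AcyclicE {V : Type} (E : Finset (V × V)) : Prop :=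
  ∀ v : V, ¬ Relation.TransGen (fun a b => (a, b) ∈ E) v v

/-- An `I`-flow in the network `N`: a family of `|I|` pairwise vertex-disjoint directed
paths from the sources indexed by `I` to the first `|I|` sinks. -/
def IsFlow {V : Type} {n : ℕ} (N : Network n V) (I : Finset (Fin n))
    (Φ : Finset (List V)) : Prop :=
  IsPathFamily N.E Φ ∧ Φ.card = I.card ∧
  (∀ p ∈ Φ, (∃ i ∈ I, p.head? = some (N.src i)) ∧
            (∃ k : Fin n, k.1 < I.card ∧ p.getLast? = some (N.snk k))) ∧
  (∀ i ∈ I, ∃ p ∈ Φ, p.head? = some (N.src i)) ∧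
  (∀ k : Fin n, k.1 < I.card → ∃ p ∈ Φ, p.getLast? = some (N.snk k))

/-- The flow-generated function over a commutative semiring determined by the vertex
weighting `w`: `f(I) = ⊕_{φ ∈ Φ_I} ⊙_{v ∈ V_φ} w(v)`. -/
noncomputable def flowGen {V : Type} {S : Type} [CommSemiring S] {n : ℕ}
    (N : Network n V) (w : V → S) (I : Finset (Fin n)) : S :=
  ∑ᶠ (Φ : Finset (List V)) (_ : IsFlow N I Φ), ∏ v ∈ flowVerts Φ, w v

/-- The in-degree of a vertex. -/
noncomputable def indeg {V : Type} (E : Finset (V × V)) (v : V) : ℕ :=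
  (E.filter (fun e => e.2 = v)).card

/-- The out-degree of a vertex. -/
noncomputable def outdeg {V : Type} (E : Finset (V × V)) (v : V) : ℕ :=
  (E.filter (fun e => e.1 = v)).card

/-- Degree of `v` in the edge set `D` (underlying undirected multigraph). -/
noncomputable def deg {V : Type} (D : Finset (V × V)) (v : V) : ℕ :=
  indeg D v + outdeg D v

/-- A walk through the symmetric difference in which `F`-edges (of the first flow) are
traversed forwardly and `B`-edges (of the second flow) backwardly: this expresses that
edges of the two flows are oppositely directed along the walk. -/
def Traverses {V : Type} (F B : Finset (V × V)) (w : List V) : Prop :=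
  w.Chain' (fun u v => (u, v) ∈ F ∨ (v, u) ∈ B)

/-- The set of (directed) edges of `F ∪ B` used by a traversal `w`. -/
noncomputable def travEdges {V : Type} (F B : Finset (V × V)) (w : List V) :
    Finset (V × V) :=
  ((w.zip w.tail).map (fun e => if (e.1, e.2) ∈ F then (e.1, e.2) else (e.2, e.1))).toFinset

/-- A circuit: a closed walk on at least two vertices with distinct inner vertices. -/
def IsCircuitList {V : Type} (w : List V) : Prop :=
  2 ≤ w.length ∧ w.head? = w.getLast? ∧ w.tail.Nodup

/-- A simple (undirected) path on at least two vertices. -/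
def IsSimplePathList {V : Type} (w : List V) : Prop :=
  2 ≤ w.length ∧ w.Nodup

/-- `comps` is a decomposition of the edge set `F ∪ B` (the symmetric difference of two
flows, `F` the edges of the first and `B` of the second) into pairwise vertex-disjoint
circuits and simple paths, along each of which `F`-edges and `B`-edges are oppositely
directed. -/
def IsDecomp {V : Type} (F B : Finset (V × V)) (comps : Finset (List V)) : Prop :=
  (∀ w ∈ comps, Traverses F B w ∧ (IsCircuitList w ∨ IsSimplePathList w)) ∧
  (∀ w ∈ comps, ∀ w' ∈ comps, w ≠ w' → ∀ v, v ∈ w → v ∉ w') ∧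
  (∀ e : V × V, (e ∈ F ∨ e ∈ B) ↔ ∃ w ∈ comps, e ∈ travEdges F B w)

/-- Number of circuits in a decomposition. -/
noncomputable def circCount {V : Type} (comps : Finset (List V)) : ℕ :=
  (comps.filter (fun w => IsCircuitList w)).card

/-- The double flow `ξ = χ^{E_φ} + χ^{E_{φ'}}` of two flows, as a multiplicity
function on edges. -/
noncomputable def dbl {V : Type} (φ φ' : Finset (List V)) : V × V → ℕ :=
  fun e => (if e ∈ famEdges φ then 1 else 0) + (if e ∈ famEdges φ' then 1 else 0)

/-- The order preserving bijection `γ_Y : [p+q] → Y` (with junk value outside `[p+q]`,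
`[p+q] = {1,…,p+q}` being 1-indexed). -/
noncomputable def gammaFn {n : ℕ} (p q : ℕ) (Y : Finset (Fin n)) (hY : Y.card = p + q)
    (hpos : 0 < p + q) (a : ℕ) : Fin n :=
  if h : a - 1 < p + q then (Y.orderIsoOfFin hY ⟨a - 1, h⟩ : Fin n)
  else (Y.orderIsoOfFin hY ⟨0, hpos⟩ : Fin n)

/-- The image `γ_Y(A) ⊆ Y` of a subset `A ⊆ [p+q]`. -/
noncomputable def gammaSet {n : ℕ} (p q : ℕ) (Y : Finset (Fin n)) (hY : Y.card = p + q)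
    (hpos : 0 < p + q) (A : Finset ℕ) : Finset (Fin n) :=
  A.image (gammaFn p q Y hY hpos)

/-- The network is in modified (vertex-split) form with split-edge set `split`:
each non-terminal vertex is incident with exactly one split-edge, whose head (tail) has
in-degree (out-degree) one, and each terminal vertex has exactly one incident edge. -/
def IsModified {V : Type} {n : ℕ} (N : Network n V) (split : Finset (V × V)) : Prop :=
  split ⊆ N.E ∧
  (∀ v : V, (¬ ∃ i : Fin n, v = N.src i ∨ v = N.snk i) →
      deg split v = 1 ∧
      (∀ e ∈ split, e.2 = v → indeg N.E v = 1) ∧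
      (∀ e ∈ split, e.1 = v → outdeg N.E v = 1)) ∧
  (∀ i : Fin n, deg N.E (N.src i) = 1 ∧ deg N.E (N.snk i) = 1)

/-- An undirected edge. -/
def UndirEdge {V : Type} (E : Finset (V × V)) (u v : V) : Prop :=
  (u, v) ∈ E ∨ (v, u) ∈ E

/-- An undirected simple path. -/
def UPath {V : Type} (E : Finset (V × V)) (w : List V) : Prop :=
  w ≠ [] ∧ w.Nodup ∧ w.Chain' (UndirEdge E)

/-- Position of a terminal vertex in the boundary order `sₙ,…,s₁,t₁,…,tₙ`. -/
def bpos {V : Type} {n : ℕ} (N : Network n V) (v : V) (k : ℕ) : Prop :=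
  (∃ i : Fin n, v = N.src i ∧ k = n - 1 - i.1) ∨ (∃ j : Fin n, v = N.snk j ∧ k = n + j.1)

/-- Combinatorial abstraction of planarity with all terminals on the outer boundary in
the order `sₙ,…,s₁,t₁,…,tₙ`: two vertex-disjoint undirected paths joining terminals
cannot have interleaved (crossing) endpoints in the boundary order. -/
def NonCrossing {V : Type} {n : ℕ} (N : Network n V) : Prop :=
  ∀ w w' : List V, UPath N.E w → UPath N.E w' → (∀ v ∈ w, v ∉ w') →
    ∀ a b c d : V, ∀ ka kb kc kd : ℕ,
      w.head? = some a → w.getLast? = some b →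
      w'.head? = some c → w'.getLast? = some d →
      bpos N a ka → bpos N b kb → bpos N c kc → bpos N d kd →
      ¬ (ka < kc ∧ kc < kb ∧ kb < kd)

/-- The half-grid `Γₙ` (0-indexed encoding of the 1-indexed vertices `(i,j)`,
`1 ≤ j ≤ i ≤ n`): vertices `(i,j)` with `j ≤ i`, edges `(i,j) → (i-1,j)` and
`(i,j) → (i,j+1)` (staying in the half-grid), sources `sᵢ = (i,1)`, sinks `tᵢ = (i,i)`. -/
def gridN (n : ℕ) : Network n (Fin n × Fin n) where
  E := Finset.univ.filter (fun e : (Fin n × Fin n) × (Fin n × Fin n) =>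
        e.1.2.1 ≤ e.1.1.1 ∧
        ((e.2.1.1 + 1 = e.1.1.1 ∧ e.2.2 = e.1.2 ∧ e.1.2.1 ≤ e.2.1.1) ∨
         (e.2.1 = e.1.1 ∧ e.2.2.1 = e.1.2.1 + 1 ∧ e.2.2.1 ≤ e.1.1.1)))
  src := fun i => (i, ⟨0, i.pos⟩)
  snk := fun i => (i, i)

/-- The interval `[a..b] ⊆ [n]` regarded as a set of indices in `Fin n` (1-indexed). -/
def intv (n a b : ℕ) : Finset (Fin n) :=
  Finset.univ.filter (fun k => a ≤ k.1 + 1 ∧ k.1 + 1 ≤ b)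

/-- The rectangle of (1-indexed) vertices `(i,j)` with `j ≤ i ≤ r`, `1 ≤ j ≤ r-a+1`. -/
def rect (n a r : ℕ) : Finset (Fin n × Fin n) :=
  Finset.univ.filter (fun v => v.2.1 ≤ v.1.1 ∧ v.1.1 + 1 ≤ r ∧ v.2.1 + 1 ≤ r - a + 1)

/-!
Every edge of `Γₙ` raises `col - row` by one, never lowers the column and never raises the
row. Hence a path from the source in row `i` to a diagonal sink has exactly `i + 1` vertices, and
the vertices of any `[a..r]`-flow lie in the rectangle and number `∑ (i + 1)` over the sources.
The hooks (along row `a - 1 + k`, then up column `k` to `tₖ`) form a flow covering the rectangle,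
so every flow covers it. Uniqueness is by descending induction on `k`: if the hook to `tₖ₊₁` is a
path of the flow, the path from the source in row `a - 1 + k` must follow that row (each of its
vertices can only be entered from the left, the vertex below lying on the next hook or outside
the rectangle) and then column `k` (the vertex to the right lies on the next hook or outside).
A grid path is determined by its vertex set, so the path containing the hook with as many
vertices is the hook. Rows and columns are 0-indexed, as in `gridN`.
-/

namespace List.IsChain

variable {α β : Type*} {R : α → α → Prop} {l l' : List α} {u v z : α}

theorem pairwise_comap {S : β → β → Prop} [IsTrans β S] {g : α → β}
    (hl : l.IsChain R) (hg : ∀ u v, R u v → S (g u) (g v)) :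
    l.Pairwise (fun u v => S (g u) (g v)) :=
  have : Trans (fun u v => S (g u) (g v)) (fun u v => S (g u) (g v))
      (fun u v => S (g u) (g v)) := ⟨fun h h' => _root_.trans h h'⟩
  (hl.imp fun u v h => hg u v h).pairwise

theorem exists_rel_of_head?_ne (hl : l.IsChain R) (hv : v ∈ l) (hne : l.head? ≠ some v) :
    ∃ u ∈ l, R u v := by
  induction l with
  | nil => simp at hv
  | cons x xs ih =>
    obtain rfl | hv := List.mem_cons.mp hv
    · simp at hne
    obtain ⟨y, ys, rfl⟩ := List.exists_cons_of_ne_nil (List.ne_nil_of_mem hv)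
    by_cases hvy : v = y
    · exact ⟨x, by simp, hvy ▸ (List.isChain_cons_cons.mp hl).1⟩
    · obtain ⟨u, hu, huv⟩ := ih hl.tail hv (by simpa using Ne.symm hvy)
      exact ⟨u, List.mem_cons_of_mem _ hu, huv⟩

theorem exists_rel_of_getLast?_ne (hl : l.IsChain R) (hv : v ∈ l) (hne : l.getLast? ≠ some v) :
    ∃ w ∈ l, R v w := by
  obtain ⟨w, hw, hvw⟩ := (List.isChain_reverse.mpr hl).exists_rel_of_head?_ne
    (List.mem_reverse.mpr hv) (by rwa [List.head?_reverse])
  exact ⟨w, List.mem_reverse.mp hw, hvw⟩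

variable [Preorder β] {g : α → β}

theorem le_of_head? (hl : l.IsChain R) (hg : ∀ u v, R u v → g u ≤ g v)
    (hu : l.head? = some u) (hv : v ∈ l) : g u ≤ g v := by
  obtain ⟨xs, rfl⟩ := List.head?_eq_some_iff.mp hu
  obtain rfl | hv := List.mem_cons.mp hv
  · exact le_rfl
  · exact List.rel_of_pairwise_cons (hl.pairwise_comap hg) hv

theorem le_of_getLast? (hl : l.IsChain R) (hg : ∀ u v, R u v → g u ≤ g v)
    (hz : l.getLast? = some z) (hv : v ∈ l) : g v ≤ g z := by
  obtain ⟨xs, rfl⟩ := List.getLast?_eq_some_iff.mp hz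
  obtain hv | hv := List.mem_append.mp hv
  · exact (List.pairwise_append.mp (hl.pairwise_comap hg)).2.2 v hv z (by simp)
  · rw [List.mem_singleton.mp hv]

theorem nodup (hl : l.IsChain R) (hg : ∀ u v, R u v → g u < g v) : l.Nodup :=
  (hl.pairwise_comap hg).imp fun h huv => h.ne (congrArg g huv)

theorem eq_of_toFinset_eq [DecidableEq α] (hl : l.IsChain R) (hl' : l'.IsChain R)
    (hg : ∀ u v, R u v → g u < g v) (h : l.toFinset = l'.toFinset) : l = l' :=
  (List.perm_of_nodup_nodup_toFinset_eq (hl.nodup hg) (hl'.nodup hg) h).eq_of_pairwise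
    (fun _ _ _ _ h h' => absurd (h.trans h') (lt_irrefl _))
    (hl.pairwise_comap hg) (hl'.pairwise_comap hg)

theorem grade_getLast?_eq {f : α → ℕ} (hl : l.IsChain R) (hf : ∀ u v, R u v → f v = f u + 1)
    (hu : l.head? = some u) (hz : l.getLast? = some z) : f z = f u + (l.length - 1) := by
  induction l generalizing u with
  | nil => simp at hu
  | cons x xs ih =>
    obtain rfl : x = u := by simpa using hu
    cases xs with
    | nil => simp_all
    | cons y ys =>
      have hxy := List.isChain_cons_cons.mp hl
      rw [ih hxy.2 rfl (by simpa [List.getLast?_cons_cons] using hz), hf x y hxy.1]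
      simp only [List.length_cons]
      omega

end List.IsChain

section Flows

variable {V : Type} {n : ℕ} {E : Finset (V × V)} {Φ : Finset (List V)} {p q : List V} {v : V}

theorem mem_flowVerts : v ∈ flowVerts Φ ↔ ∃ p ∈ Φ, v ∈ p := by
  simp [flowVerts]

theorem IsPathFamily.eq_of_mem_of_mem (hΦ : IsPathFamily E Φ) (hp : p ∈ Φ) (hq : q ∈ Φ)
    (hvp : v ∈ p) (hvq : v ∈ q) : p = q :=
  by_contra fun hne => hΦ.2 p hp q hq hne v hvp hvq

theorem IsPathFamily.card_flowVerts (hΦ : IsPathFamily E Φ) :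
    (flowVerts Φ).card = ∑ p ∈ Φ, p.length := by
  rw [flowVerts, Finset.card_biUnion]
  · exact Finset.sum_congr rfl fun p hp => List.toFinset_card_of_nodup (hΦ.1 p hp).2.1
  · intro p hp q hq hne
    exact Finset.disjoint_left.mpr fun v hvp hvq =>
      hΦ.2 p hp q hq hne v (List.mem_toFinset.mp hvp) (List.mem_toFinset.mp hvq)

theorem IsFlow.sum_eq_sum_src {N : Network n V} {I : Finset (Fin n)} (hF : IsFlow N I Φ)
    (hsrc : Function.Injective N.src) {M : Type*} [AddCommMonoid M] {f : List V → M}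
    {g : Fin n → M} (hfg : ∀ p ∈ Φ, ∀ i, p.head? = some (N.src i) → f p = g i) :
    ∑ p ∈ Φ, f p = ∑ i ∈ I, g i := by
  obtain ⟨hfam, -, hends, hsources, -⟩ := hF
  choose path hpath hhead using hsources
  refine (Finset.sum_bij path hpath (fun i hi j hj hij => hsrc ?_) (fun p hp => ?_)
    fun i hi => (hfg _ (hpath i hi) i (hhead i hi)).symm).symm
  · exact Option.some.inj ((hhead i hi).symm.trans (hij ▸ hhead j hj))
  · obtain ⟨i, hi, hpi⟩ := (hends p hp).1
    exact ⟨i, hi, hfam.eq_of_mem_of_mem (hpath i hi) hp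
      (List.mem_of_mem_head? (hhead i hi)) (List.mem_of_mem_head? hpi)⟩

theorem flowGen_eq_prod_of_isFlow_unique {S : Type} [CommSemiring S] {N : Network n V}
    {I : Finset (Fin n)} (w : V → S) (hΦ : IsFlow N I Φ) (huniq : ∀ Ψ, IsFlow N I Ψ → Ψ = Φ) :
    flowGen N w I = ∏ v ∈ flowVerts Φ, w v := by
  have hset : {Ψ | IsFlow N I Ψ} = {Φ} :=
    Set.eq_singleton_iff_unique_mem.mpr ⟨hΦ, huniq⟩
  change ∑ᶠ Ψ ∈ {Ψ | IsFlow N I Ψ}, _ = _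
  rw [hset, finsum_mem_singleton]

end Flows

section HalfGrid

variable {n : ℕ}

theorem mem_gridN_E {u v : Fin n × Fin n} :
    (u, v) ∈ (gridN n).E ↔ u.2.1 ≤ u.1.1 ∧
      ((v.1.1 + 1 = u.1.1 ∧ v.2.1 = u.2.1 ∧ u.2.1 ≤ v.1.1) ∨
       (v.1.1 = u.1.1 ∧ v.2.1 = u.2.1 + 1 ∧ v.2.1 ≤ u.1.1)) := by
  simp [gridN, Fin.ext_iff]

theorem gridN_src_injective : Function.Injective (gridN n).src :=
  fun _ _ h => (Prod.ext_iff.mp h).1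

def gridGrade (v : Fin n × Fin n) : ℕ := v.2.1 + (n - v.1.1)

theorem gridGrade_succ {u v : Fin n × Fin n} (h : (u, v) ∈ (gridN n).E) :
    gridGrade v = gridGrade u + 1 := by
  have := mem_gridN_E.mp h
  have := u.1.2
  unfold gridGrade
  omega

abbrev GridPath (n : ℕ) (p : List (Fin n × Fin n)) : Prop :=
  p.IsChain fun u v => (u, v) ∈ (gridN n).E

theorem GridPath.gridGrade_eq_add_length {p : List (Fin n × Fin n)} (hp : GridPath n p)
    {u z : Fin n × Fin n} (hu : p.head? = some u) (hz : p.getLast? = some z) :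
    gridGrade z = gridGrade u + (p.length - 1) :=
  hp.grade_getLast?_eq (fun _ _ => gridGrade_succ) hu hz

theorem GridPath.bounds_of_mem {p : List (Fin n × Fin n)} (hp : GridPath n p)
    {u z v : Fin n × Fin n} (hu : p.head? = some u) (hz : p.getLast? = some z) (hv : v ∈ p) :
    v.1.1 ≤ u.1.1 ∧ v.2.1 ≤ z.2.1 ∧ gridGrade v ≤ gridGrade z := by
  have hrow := hp.le_of_head? (g := fun v => n - v.1.1)
    (fun u v h => by have := mem_gridN_E.mp h; omega) hu hv
  have := u.1.2
  refine ⟨by omega, hp.le_of_getLast? (g := fun v => v.2.1)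
    (fun u v h => by have := mem_gridN_E.mp h; omega) hz hv, ?_⟩
  exact hp.le_of_getLast? (fun u v h => (gridGrade_succ h).trans_ge (Nat.le_succ _)) hz hv

/-- The path from `sᵢ` along row `i` to column `k`, then up column `k` to `tₖ`
(the empty list when `i ≥ n`). -/
def hook (n i k : ℕ) : List (Fin n × Fin n) :=
  if h : i < n then
    List.ofFn fun t : Fin (i + 1) => (⟨i - (t - k), by omega⟩, ⟨min t k, by omega⟩)
  else []

variable {i k : ℕ}

theorem hook_of_lt (hi : i < n) : hook n i k =
    List.ofFn fun t : Fin (i + 1) => (⟨i - (t - k), by omega⟩, ⟨min t k, by omega⟩) :=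
  dif_pos hi

theorem length_hook (hi : i < n) : (hook n i k).length = i + 1 := by
  simp [hook_of_lt hi]

theorem mem_hook (hki : k ≤ i) (hi : i < n) {v : Fin n × Fin n} :
    v ∈ hook n i k ↔
      (v.1.1 = i ∧ v.2.1 ≤ k) ∨ (v.2.1 = k ∧ k ≤ v.1.1 ∧ v.1.1 ≤ i) := by
  rw [hook_of_lt hi, List.mem_ofFn]
  constructor
  · rintro ⟨t, rfl⟩
    have := t.2
    simp only
    omega
  · rintro (⟨hr, hc⟩ | ⟨hc, hl1, hl2⟩)
    · exact ⟨⟨v.2.1, by omega⟩, Prod.ext (Fin.ext (by simp only; omega))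
        (Fin.ext (by simp only; omega))⟩
    · exact ⟨⟨k + (i - v.1.1), by omega⟩, Prod.ext (Fin.ext (by simp only; omega))
        (Fin.ext (by simp only; omega))⟩

theorem head?_hook (hi : i < n) : (hook n i k).head? = some ((gridN n).src ⟨i, hi⟩) := by
  simp [hook_of_lt hi, List.ofFn_succ, gridN]

theorem getLast?_hook (hki : k ≤ i) (hi : i < n) :
    (hook n i k).getLast? = some ((gridN n).snk ⟨k, by omega⟩) := by
  rw [hook_of_lt hi, List.getLast?_eq_getElem?, List.getElem?_ofFn]
  simp only [List.length_ofFn, Nat.add_sub_cancel, lt_add_one, dite_true]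
  refine congrArg some (Prod.ext (Fin.ext ?_) (Fin.ext ?_))
  · show i - (i - k) = k; omega
  · show min i k = k; omega

theorem gridPath_hook (hki : k ≤ i) (hi : i < n) : GridPath n (hook n i k) := by
  rw [GridPath, hook_of_lt hi, List.isChain_iff_getElem]
  intro t ht
  simp only [List.length_ofFn] at ht
  simp only [List.getElem_ofFn, mem_gridN_E]
  omega

theorem isDirPath_hook (hki : k ≤ i) (hi : i < n) : IsDirPath (gridN n).E (hook n i k) :=
  ⟨List.ne_nil_of_length_pos (by rw [length_hook hi]; omega),
    (gridPath_hook hki hi).nodup (fun _ _ h => (gridGrade_succ h).trans_gt (Nat.lt_succ_self _)),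
    gridPath_hook hki hi⟩

end HalfGrid

section IntervalFlows

variable {n a r : ℕ}

theorem mem_intv {i : Fin n} : i ∈ intv n a r ↔ a ≤ i.1 + 1 ∧ i.1 + 1 ≤ r := by
  simp [intv]

theorem mem_rect {v : Fin n × Fin n} :
    v ∈ rect n a r ↔ v.2.1 ≤ v.1.1 ∧ v.1.1 + 1 ≤ r ∧ v.2.1 + 1 ≤ r - a + 1 := by
  simp [rect]

theorem card_intv (h1 : 1 ≤ a) (h3 : r ≤ n) : (intv n a r).card = r + 1 - a := by
  have : intv n a r = (Finset.Ico (a - 1) r).attachFin fun m hm => by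
      have := (Finset.mem_Ico.mp hm).2; omega := by
    ext i
    simp only [mem_intv, Finset.mem_attachFin, Finset.mem_Ico]
    omega
  rw [this, Finset.card_attachFin, Nat.card_Ico]
  omega

def hookFlow (n a r : ℕ) : Finset (List (Fin n × Fin n)) :=
  (Finset.range (r + 1 - a)).image fun k => hook n (a - 1 + k) k

theorem mem_hookFlow {p : List (Fin n × Fin n)} :
    p ∈ hookFlow n a r ↔ ∃ k < r + 1 - a, hook n (a - 1 + k) k = p := by
  simp [hookFlow]

theorem card_hookFlow (h1 : 1 ≤ a) (h3 : r ≤ n) : (hookFlow n a r).card = r + 1 - a := by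
  rw [hookFlow, Finset.card_image_of_injOn, Finset.card_range]
  intro k hk k' hk' h
  simp only [Finset.coe_range, Set.mem_Iio] at hk hk'
  have := (head?_hook (k := k) (show a - 1 + k < n by omega)).symm.trans
    ((congrArg List.head? h).trans (head?_hook (k := k') (show a - 1 + k' < n by omega)))
  have : a - 1 + k = a - 1 + k' := Fin.val_eq_of_eq (gridN_src_injective (Option.some.inj this))
  omega

theorem isFlow_hookFlow (h1 : 1 ≤ a) (h3 : r ≤ n) :
    IsFlow (gridN n) (intv n a r) (hookFlow n a r) := by
  refine ⟨⟨?_, ?_⟩, by rw [card_hookFlow h1 h3, card_intv h1 h3], ?_, ?_, ?_⟩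
  · rintro p hp
    obtain ⟨k, hk, rfl⟩ := mem_hookFlow.mp hp
    exact isDirPath_hook (by omega) (by omega)
  · rintro p hp q hq hne v hvp hvq
    obtain ⟨k, hk, rfl⟩ := mem_hookFlow.mp hp
    obtain ⟨k', hk', rfl⟩ := mem_hookFlow.mp hq
    have := (mem_hook (by omega) (by omega)).mp hvp
    have := (mem_hook (by omega) (by omega)).mp hvq
    exact hne (by congr 1 <;> omega)
  · rintro p hp
    obtain ⟨k, hk, rfl⟩ := mem_hookFlow.mp hp
    exact ⟨⟨⟨a - 1 + k, by omega⟩, mem_intv.mpr (by simp only; omega), head?_hook (by omega)⟩,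
      ⟨⟨k, by omega⟩, by rw [card_intv h1 h3]; exact hk, getLast?_hook (by omega) (by omega)⟩⟩
  · intro i hi
    have := mem_intv.mp hi
    obtain ⟨k, hk, hik⟩ : ∃ k < r + 1 - a, a - 1 + k = i.1 := ⟨i.1 + 1 - a, by omega, by omega⟩
    exact ⟨_, mem_hookFlow.mpr ⟨k, hk, rfl⟩, hik ▸ head?_hook i.2⟩
  · intro k hk
    rw [card_intv h1 h3] at hk
    exact ⟨_, mem_hookFlow.mpr ⟨k.1, hk, rfl⟩, getLast?_hook (by omega) (by omega)⟩

theorem flowVerts_hookFlow (h1 : 1 ≤ a) (h2 : a ≤ r) (h3 : r ≤ n) :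
    flowVerts (hookFlow n a r) = rect n a r := by
  ext v
  simp only [mem_flowVerts, mem_hookFlow, mem_rect]
  constructor
  · rintro ⟨_, ⟨k, hk, rfl⟩, hv⟩
    have := (mem_hook (by omega) (by omega)).mp hv
    omega
  · intro hv
    -- `v` lies on the vertical leg of hook `v.2` or on the horizontal leg of hook `v.1 + 1 - a`
    by_cases hleg : v.1.1 ≤ a - 1 + v.2.1
    · refine ⟨_, ⟨v.2.1, by omega, rfl⟩, ?_⟩
      exact (mem_hook (by omega) (by omega)).mpr (by omega)
    · refine ⟨_, ⟨v.1.1 + 1 - a, by omega, rfl⟩, ?_⟩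
      exact (mem_hook (by omega) (by omega)).mpr (by omega)

end IntervalFlows

section GridFlows

variable {n a r : ℕ} {I : Finset (Fin n)} {Φ : Finset (List (Fin n × Fin n))}
  {p : List (Fin n × Fin n)}

theorem IsFlow.length_of_head?_gridN (hF : IsFlow (gridN n) I Φ) (hp : p ∈ Φ) {i : Fin n}
    (hi : p.head? = some ((gridN n).src i)) : p.length = i.1 + 1 := by
  obtain ⟨hfam, -, hends, -, -⟩ := hF
  obtain ⟨k, -, hk⟩ := (hends p hp).2
  obtain ⟨hne, -, hpath⟩ := hfam.1 p hp
  have hgrade := GridPath.gridGrade_eq_add_length hpath hi hk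
  have := List.length_pos_iff.mpr hne
  simp only [gridGrade, gridN] at hgrade
  omega

theorem IsFlow.card_flowVerts_gridN (hF : IsFlow (gridN n) I Φ) :
    (flowVerts Φ).card = ∑ i ∈ I, (i.1 + 1) :=
  hF.1.card_flowVerts.trans
    (hF.sum_eq_sum_src gridN_src_injective fun _ hp _ hi => hF.length_of_head?_gridN hp hi)

theorem IsFlow.flowVerts_subset_rect (hF : IsFlow (gridN n) (intv n a r) Φ) (h1 : 1 ≤ a)
    (h3 : r ≤ n) : flowVerts Φ ⊆ rect n a r := by
  intro v hv
  obtain ⟨p, hp, hvp⟩ := mem_flowVerts.mp hv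
  obtain ⟨hfam, -, hends, -, -⟩ := hF
  obtain ⟨⟨i, hi, hhead⟩, ⟨k, hk, hlast⟩⟩ := hends p hp
  have hbounds := GridPath.bounds_of_mem (hfam.1 p hp).2.2 hhead hlast hvp
  have := mem_intv.mp hi
  rw [card_intv h1 h3] at hk
  simp only [gridGrade, gridN] at hbounds
  exact mem_rect.mpr (by omega)

theorem IsFlow.flowVerts_eq_rect (hF : IsFlow (gridN n) (intv n a r) Φ) (h1 : 1 ≤ a)
    (h2 : a ≤ r) (h3 : r ≤ n) : flowVerts Φ = rect n a r := by
  refine Finset.eq_of_subset_of_card_le (hF.flowVerts_subset_rect h1 h3) ?_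
  rw [← flowVerts_hookFlow h1 h2 h3, hF.card_flowVerts_gridN,
    (isFlow_hookFlow h1 h3).card_flowVerts_gridN]

variable {k : ℕ} {P : List (Fin n × Fin n)} {i : Fin n}

theorem IsFlow.mem_of_row_of_next_hook (hF : IsFlow (gridN n) (intv n a r) Φ) (h1 : 1 ≤ a)
    (h2 : a ≤ r) (h3 : r ≤ n) (hk : a - 1 + k < r)
    (hnext : a + k < r → hook n (a + k) (k + 1) ∈ Φ) (hP : P ∈ Φ) (hi : i.1 = a - 1 + k)
    (hhead : P.head? = some ((gridN n).src i)) :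
    ∀ c ≤ k, ∀ v : Fin n × Fin n, v.1.1 = i.1 → v.2.1 = c → v ∈ P := by
  have hrect := hF.flowVerts_eq_rect h1 h2 h3
  obtain ⟨hfam, -, hends, -, -⟩ := hF
  intro c
  induction c with
  | zero =>
    intro _ v hv1 hv2
    rw [show v = (gridN n).src i from Prod.ext (Fin.ext hv1) (Fin.ext hv2)]
    exact List.mem_of_mem_head? hhead
  | succ c ih =>
    intro hc v hv1 hv2
    have hv : v ∈ flowVerts Φ := hrect ▸ mem_rect.mpr (by omega)
    obtain ⟨Q, hQ, hvQ⟩ := mem_flowVerts.mp hv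
    obtain ⟨⟨j, -, hQhead⟩, -⟩ := hends Q hQ
    obtain ⟨w, hwQ, hwv⟩ := (hfam.1 Q hQ).2.2.exists_rel_of_head?_ne hvQ (by
      rw [hQhead]
      intro h
      have : 0 = v.2.1 := congrArg (fun x => x.2.1) (Option.some.inj h)
      omega)
    have hedge := mem_gridN_E.mp hwv
    by_cases hbelow : w.1.1 = v.1.1 + 1
    · -- then `w` lies on the row of the next hook, whose path would then also contain `v`
      have hw := mem_rect.mp (hrect ▸ mem_flowVerts.mpr ⟨Q, hQ, hwQ⟩)
      have hQnext := hfam.eq_of_mem_of_mem hQ (hnext (by omega)) hwQ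
        ((mem_hook (by omega) (by omega)).mpr (by omega))
      have := (mem_hook (by omega) (by omega)).mp (hQnext ▸ hvQ)
      omega
    · have hwP := ih (by omega) w (by omega) (by omega)
      exact hfam.eq_of_mem_of_mem hP hQ hwP hwQ ▸ hvQ

theorem IsFlow.mem_of_col_of_next_hook (hF : IsFlow (gridN n) (intv n a r) Φ) (h1 : 1 ≤ a)
    (h2 : a ≤ r) (h3 : r ≤ n) (hk : a - 1 + k < r)
    (hnext : a + k < r → hook n (a + k) (k + 1) ∈ Φ) (hP : P ∈ Φ) (hi : i.1 = a - 1 + k)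
    (hhead : P.head? = some ((gridN n).src i)) :
    ∀ d ≤ a - 1, ∀ v : Fin n × Fin n, v.1.1 = i.1 - d → v.2.1 = k → v ∈ P := by
  have hrect := hF.flowVerts_eq_rect h1 h2 h3
  have hrow := hF.mem_of_row_of_next_hook h1 h2 h3 hk hnext hP hi hhead
  obtain ⟨hfam, -, hends, -, -⟩ := hF
  intro d
  induction d with
  | zero =>
    intro _ v hv1 hv2
    exact hrow k le_rfl v hv1 hv2
  | succ d ih =>
    intro hd v hv1 hv2
    have huP := ih (by omega) (⟨v.1.1 + 1, by omega⟩, v.2) (by simp only; omega) hv2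
    obtain ⟨kk, -, hlast⟩ := (hends P hP).2
    obtain ⟨s, hsP, hus⟩ := (hfam.1 P hP).2.2.exists_rel_of_getLast?_ne huP (by
      rw [hlast]
      intro h
      have : kk.1 = v.1.1 + 1 := congrArg (fun x => x.1.1) (Option.some.inj h)
      have : kk.1 = v.2.1 := congrArg (fun x => x.2.1) (Option.some.inj h)
      omega)
    have hedge := mem_gridN_E.mp hus
    by_cases hright : s.2.1 = k + 1
    · -- then `s` lies on the column of the next hook, which does not contain the source `i`
      have hs := mem_rect.mp (hrect ▸ mem_flowVerts.mpr ⟨P, hP, hsP⟩)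
      have hPnext := hfam.eq_of_mem_of_mem hP (hnext (by omega)) hsP
        ((mem_hook (by omega) (by omega)).mpr (by simp only at hedge; omega))
      have := (mem_hook (by omega) (by omega)).mp (hPnext ▸ List.mem_of_mem_head? hhead)
      simp only [gridN] at this
      omega
    · rw [show v = s from Prod.ext (Fin.ext (by simp only at hedge; omega))
        (Fin.ext (by simp only at hedge; omega))]
      exact hsP

theorem IsFlow.hook_mem_of_next_hook (hF : IsFlow (gridN n) (intv n a r) Φ) (h1 : 1 ≤ a)
    (h2 : a ≤ r) (h3 : r ≤ n) (hk : a - 1 + k < r)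
    (hnext : a + k < r → hook n (a + k) (k + 1) ∈ Φ) : hook n (a - 1 + k) k ∈ Φ := by
  have ⟨hfam, _, _, hsources, _⟩ := hF
  obtain ⟨P, hP, hhead⟩ := hsources ⟨a - 1 + k, by omega⟩ (mem_intv.mpr (by simp only; omega))
  obtain ⟨-, hnodup, hpath⟩ := hfam.1 P hP
  have hsub : (hook n (a - 1 + k) k).toFinset ⊆ P.toFinset := by
    intro v hv
    rw [List.mem_toFinset, mem_hook (by omega) (by omega)] at hv
    rw [List.mem_toFinset]
    rcases hv with ⟨hrow, hcol⟩ | ⟨hcol, hrow1, hrow2⟩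
    · exact hF.mem_of_row_of_next_hook h1 h2 h3 hk hnext hP rfl hhead v.2.1 hcol v hrow rfl
    · exact hF.mem_of_col_of_next_hook h1 h2 h3 hk hnext hP rfl hhead (a - 1 + k - v.1.1)
        (by omega) v (by simp only; omega) hcol
  have hcard : P.toFinset.card ≤ (hook n (a - 1 + k) k).toFinset.card := by
    rw [List.toFinset_card_of_nodup hnodup, hF.length_of_head?_gridN hP hhead,
      List.toFinset_card_of_nodup (isDirPath_hook (by omega) (by omega)).2.1,
      length_hook (by omega)]
  have hPhook := hpath.eq_of_toFinset_eq (gridPath_hook (by omega) (by omega))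
    (fun _ _ h => (gridGrade_succ h).trans_gt (Nat.lt_succ_self _))
    (Finset.eq_of_subset_of_card_le hsub hcard).symm
  exact hPhook ▸ hP

theorem IsFlow.hook_mem (hF : IsFlow (gridN n) (intv n a r) Φ) (h1 : 1 ≤ a) (h2 : a ≤ r)
    (h3 : r ≤ n) (hk : k < r + 1 - a) : hook n (a - 1 + k) k ∈ Φ := by
  obtain ⟨d, hd⟩ : ∃ d, k + d = r - a := ⟨r - a - k, by omega⟩
  induction d generalizing k with
  | zero => exact hF.hook_mem_of_next_hook h1 h2 h3 (by omega) (fun _ => by omega)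
  | succ d ih =>
    refine hF.hook_mem_of_next_hook h1 h2 h3 (by omega) fun _ => ?_
    have := ih (k := k + 1) (by omega) (by omega)
    rwa [show a - 1 + (k + 1) = a + k by omega] at this

theorem IsFlow.eq_hookFlow (hF : IsFlow (gridN n) (intv n a r) Φ) (h1 : 1 ≤ a) (h2 : a ≤ r)
    (h3 : r ≤ n) : Φ = hookFlow n a r := by
  refine Finset.Subset.antisymm (fun p hp => ?_) fun p hp => ?_
  · have ⟨hfam, _, hends, _, _⟩ := hF
    obtain ⟨⟨i, hi, hhead⟩, -⟩ := hends p hp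
    have := mem_intv.mp hi
    obtain ⟨k, hk, hik⟩ : ∃ k < r + 1 - a, a - 1 + k = i.1 := ⟨i.1 + 1 - a, by omega, by omega⟩
    have hiq : (gridN n).src i ∈ hook n (a - 1 + k) k :=
      hik ▸ List.mem_of_mem_head? (head?_hook i.2)
    exact hfam.eq_of_mem_of_mem hp (hF.hook_mem h1 h2 h3 hk) (List.mem_of_mem_head? hhead) hiq ▸
      mem_hookFlow.mpr ⟨k, hk, rfl⟩
  · obtain ⟨k, hk, rfl⟩ := mem_hookFlow.mp hp
    exact hF.hook_mem h1 h2 h3 hk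

end GridFlows

/-- In the half-grid `Γₙ`, every nonempty interval `I = [a..r] ⊆ [n]` admits exactly one
`I`-flow; it passes exactly through the vertices `(i,j)` with `j ≤ i ≤ r` and
`1 ≤ j ≤ r-a+1`, so that for any weighting `w` in a commutative semiring,
`f_w([a..r]) = ⊙_{j ≤ i ≤ r, 1 ≤ j ≤ r-a+1} w(i,j)`. -/
theorem stmt19 {S : Type} [CommSemiring S] (n a r : ℕ)
    (h1 : 1 ≤ a) (h2 : a ≤ r) (h3 : r ≤ n) (w : Fin n × Fin n → S) :
    (∃! Φ : Finset (List (Fin n × Fin n)), IsFlow (gridN n) (intv n a r) Φ) ∧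
    (∀ Φ : Finset (List (Fin n × Fin n)), IsFlow (gridN n) (intv n a r) Φ →
        flowVerts Φ = rect n a r) ∧
    flowGen (gridN n) w (intv n a r) = ∏ v ∈ rect n a r, w v := by
  have hflow := isFlow_hookFlow h1 h3
  have huniq : ∀ Φ, IsFlow (gridN n) (intv n a r) Φ → Φ = hookFlow n a r :=
    fun Φ hΦ => hΦ.eq_hookFlow h1 h2 h3
  refine ⟨⟨_, hflow, huniq⟩, fun Φ hΦ => hΦ.flowVerts_eq_rect h1 h2 h3, ?_⟩
  rw [flowGen_eq_prod_of_isFlow_unique w hflow huniq, flowVerts_hookFlow h1 h2 h3]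
end
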